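/- arXiv:2504.13270 — 11 statements merged into one kernel-verified Lean document; each statement's English description precedes it below -/
import Mathlib

section
/- Let r > 0 and let γ : [0, πr] → ℝⁿ be a C² unit-speed curve (‖γ'(t)‖ = 1 for all t) whose curvature satisfies ‖γ''(t)‖ ≤ 1/r for all t ∈ [0, πr]. Then the chord length of γ is at least the chord length (diameter) of the comparison half-circle of radius r, that is, ‖γ(πr) − γ(0)‖ ≥ 2r. -/
open Real Set Filter Topology
open scoped RealInnerProductSpace

/-! Let `m = πr/2` be the midpoint and `e = γ' m`. The unit tangent `γ'` moves on the unit sphere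
with speed at most `1/r`, so `a t = ⟪γ' t, e⟫` satisfies `|a'| ≤ √(1 - a²)/r` and `a m = 1`;
comparing with slightly faster cosines gives `a t ≥ cos ((t - m)/r)`, i.e. the tangent never turns
by more than `|t - m|/r ≤ π/2` away from `e`. Integrating,
`‖γ(πr) - γ 0‖ ≥ ⟪γ(πr) - γ 0, e⟫ = ∫ a ≥ ∫₀^{πr} cos ((t - m)/r) dt = 2r`. -/

/-- `ω > k` and `δ > 0` make the barrier strict where it touches `a`, since there `sin > 0`. -/
theorem cos_add_le_of_neg_mul_sqrt_le_deriv {a a' : ℝ → ℝ} {c d k ω δ : ℝ} (hk : 0 ≤ k)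
    (hkω : k < ω) (hδ : 0 < δ) (hπ : ω * (d - c) + δ < π)
    (ha : ContinuousOn a (Icc c d)) (ha' : ∀ x ∈ Ico c d, HasDerivWithinAt a (a' x) (Ici x) x)
    (hc : 1 ≤ a c) (hbound : ∀ x ∈ Ico c d, -(k * √(1 - a x ^ 2)) ≤ a' x) :
    ∀ t ∈ Icc c d, cos (ω * (t - c) + δ) ≤ a t := by
  have hphase : ∀ x : ℝ, HasDerivAt (fun t => ω * (t - c) + δ) ω x := fun x => by
    simpa using (((hasDerivAt_id x).sub_const c).const_mul ω).add_const δ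
  refine image_le_of_deriv_right_lt_deriv_boundary' (f := fun t => cos (ω * (t - c) + δ))
    (by fun_prop)
    (fun x _ => ((hasDerivAt_cos _).comp x (hphase x)).hasDerivWithinAt)
    ((cos_le_one _).trans hc) ha ha' fun x hx hxa => ?_
  set u := ω * (x - c) + δ
  have hsin : 0 < sin u := by
    refine sin_pos_of_pos_of_lt_pi (by nlinarith [hx.1]) ?_
    nlinarith [hx.2]
  have hsqrt : √(1 - a x ^ 2) = sin u := by
    rw [← hxa, ← sin_sq, sqrt_sq hsin.le]
  have hax := hbound x hx
  rw [hsqrt] at hax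
  calc -sin u * ω < -(k * sin u) := by nlinarith
    _ ≤ a' x := hax

theorem cos_mul_sub_le_of_neg_mul_sqrt_le_deriv {a a' : ℝ → ℝ} {c d k : ℝ} (hk : 0 ≤ k)
    (hkd : k * (d - c) < π)
    (ha : ContinuousOn a (Icc c d)) (ha' : ∀ x ∈ Ico c d, HasDerivWithinAt a (a' x) (Ici x) x)
    (hc : 1 ≤ a c) (hbound : ∀ x ∈ Ico c d, -(k * √(1 - a x ^ 2)) ≤ a' x) :
    ∀ t ∈ Icc c d, cos (k * (t - c)) ≤ a t := by
  intro t ht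
  have hphase : Tendsto (fun ε => (k + ε) * (d - c) + ε) (𝓝[>] 0) (𝓝 (k * (d - c))) := by
    have : Continuous (fun ε => (k + ε) * (d - c) + ε) := by fun_prop
    simpa using (this.tendsto 0).mono_left nhdsWithin_le_nhds
  have hcos : Tendsto (fun ε => cos ((k + ε) * (t - c) + ε)) (𝓝[>] 0) (𝓝 (cos (k * (t - c)))) := by
    have : Continuous (fun ε => cos ((k + ε) * (t - c) + ε)) := by fun_prop
    simpa using (this.tendsto 0).mono_left nhdsWithin_le_nhds
  refine le_of_tendsto hcos ?_
  filter_upwards [self_mem_nhdsWithin, hphase.eventually (gt_mem_nhds hkd)] with ε hε hεπ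
  exact cos_add_le_of_neg_mul_sqrt_le_deriv hk (lt_add_of_pos_right k hε) hε hεπ ha ha' hc
    hbound t ht

section
variable {E : Type*} [NormedAddCommGroup E] [InnerProductSpace ℝ E]

theorem inner_eq_zero_of_hasDerivWithinAt_of_norm_eq {f : ℝ → E} {f' : E} {s : Set ℝ} {x : ℝ}
    {R : ℝ} (hf : HasDerivWithinAt f f' s x) (hs : UniqueDiffWithinAt ℝ s x) (hx : x ∈ s)
    (hnorm : ∀ y ∈ s, ‖f y‖ = R) : ⟪f x, f'⟫ = 0 := by
  have hconst : HasDerivWithinAt (‖f ·‖ ^ 2) 0 s x :=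
    (hasDerivWithinAt_const x s (R ^ 2)).congr (fun y hy => by rw [hnorm y hy])
      (by rw [hnorm x hx])
  have hderiv := hs.eq_deriv _ hf.norm_sq hconst
  linarith

theorem abs_inner_le_norm_mul_sqrt_one_sub_inner_sq {x y w : E} (hx : ‖x‖ = 1) (hy : ‖y‖ = 1)
    (hw : ⟪x, w⟫ = 0) : |⟪w, y⟫| ≤ ‖w‖ * √(1 - ⟪x, y⟫ ^ 2) := by
  have hproj : ⟪w, y⟫ = ⟪w, y - ⟪x, y⟫ • x⟫ := by
    rw [inner_sub_right, real_inner_smul_right, real_inner_comm x w, hw, mul_zero, sub_zero]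
  have hsq : ‖y - ⟪x, y⟫ • x‖ ^ 2 = 1 - ⟪x, y⟫ ^ 2 := by
    rw [norm_sub_sq_real, real_inner_smul_right, norm_smul, hx, hy, real_inner_comm,
      norm_eq_abs, mul_one, sq_abs]
    ring
  have hnorm : ‖y - ⟪x, y⟫ • x‖ = √(1 - ⟪x, y⟫ ^ 2) := by
    rw [← hsq, sqrt_sq (norm_nonneg _)]
  rw [hproj, ← hnorm]
  exact abs_real_inner_le_norm _ _

theorem cos_mul_sub_left_le_inner_of_norm_deriv_le {v v' : ℝ → E} {c d k : ℝ} (hk : 0 ≤ k)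
    (hkd : k * (d - c) < π) (hv : ∀ t ∈ Icc c d, HasDerivWithinAt v (v' t) (Icc c d) t)
    (hnorm : ∀ t ∈ Icc c d, ‖v t‖ = 1) (hbound : ∀ t ∈ Icc c d, ‖v' t‖ ≤ k) :
    ∀ t ∈ Icc c d, cos (k * (t - c)) ≤ ⟪v t, v c⟫ := by
  have hv_inner : ∀ t ∈ Icc c d,
      HasDerivWithinAt (fun s => ⟪v s, v c⟫) ⟪v' t, v c⟫ (Icc c d) t := fun t ht => by
    simpa using (hv t ht).inner ℝ (hasDerivWithinAt_const t _ (v c))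
  intro t ht
  have hc : c ∈ Icc c d := left_mem_Icc.2 (ht.1.trans ht.2)
  refine cos_mul_sub_le_of_neg_mul_sqrt_le_deriv hk hkd
    (fun t ht => (hv_inner t ht).continuousWithinAt)
    (fun t ht => (hv_inner t (Ico_subset_Icc_self ht)).mono_of_mem_nhdsWithin
      (Icc_mem_nhdsGE_of_mem ht))
    (by rw [real_inner_self_eq_norm_sq, hnorm c hc, one_pow]) (fun x hx => ?_) t ht
  have hx' := Ico_subset_Icc_self hx
  have horth : ⟪v x, v' x⟫ = 0 :=
    inner_eq_zero_of_hasDerivWithinAt_of_norm_eq (hv x hx')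
      (uniqueDiffOn_Icc (hx.1.trans_lt hx.2) x hx') hx' hnorm
  have hperp := abs_inner_le_norm_mul_sqrt_one_sub_inner_sq (hnorm x hx') (hnorm c hc) horth
  calc -(k * √(1 - ⟪v x, v c⟫ ^ 2)) ≤ -(‖v' x‖ * √(1 - ⟪v x, v c⟫ ^ 2)) := by
        gcongr; exact hbound x hx'
    _ ≤ ⟪v' x, v c⟫ := neg_le_of_abs_le hperp

theorem cos_mul_sub_le_inner_of_norm_deriv_le {v v' : ℝ → E} {c d k : ℝ} (hk : 0 ≤ k)
    (hv : ∀ t ∈ Icc c d, HasDerivWithinAt v (v' t) (Icc c d) t)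
    (hnorm : ∀ t ∈ Icc c d, ‖v t‖ = 1) (hbound : ∀ t ∈ Icc c d, ‖v' t‖ ≤ k) {s t : ℝ}
    (hs : s ∈ Icc c d) (ht : t ∈ Icc c d) (hst : k * |t - s| < π) :
    cos (k * (t - s)) ≤ ⟪v t, v s⟫ := by
  rcases le_total s t with hst' | hts
  · have hsub : Icc s t ⊆ Icc c d := Icc_subset_Icc hs.1 ht.2
    rw [abs_of_nonneg (sub_nonneg.2 hst')] at hst
    exact cos_mul_sub_left_le_inner_of_norm_deriv_le hk hst
      (fun x hx => (hv x (hsub hx)).mono hsub) (fun x hx => hnorm x (hsub hx))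
      (fun x hx => hbound x (hsub hx)) t (right_mem_Icc.2 hst')
  · have hmaps : MapsTo Neg.neg (Icc (-s) (-t)) (Icc c d) := fun x hx =>
      ⟨ht.1.trans (le_neg.1 hx.2), (neg_le.1 hx.1).trans hs.2⟩
    rw [abs_of_nonpos (sub_nonpos.2 hts)] at hst
    have hback := cos_mul_sub_left_le_inner_of_norm_deriv_le (v := v ∘ Neg.neg)
      (v' := fun x => -v' (-x)) hk (by linarith) (fun x hx => ?_) (fun x hx => hnorm _ (hmaps hx))
      (fun x hx => (norm_neg _).trans_le (hbound _ (hmaps hx))) (-t)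
      (right_mem_Icc.2 (neg_le_neg hts))
    · rw [show k * (-t - -s) = -(k * (t - s)) by ring, cos_neg] at hback
      simpa using hback
    · simpa using (hv _ (hmaps hx)).scomp x (hasDerivAt_neg x).hasDerivWithinAt hmaps

theorem integral_inner_le_norm_sub [CompleteSpace E] {f f' : ℝ → E} {a b : ℝ} (hab : a ≤ b)
    (hf : ∀ x ∈ Icc a b, HasDerivWithinAt f (f' x) (Icc a b) x)
    (hf' : IntervalIntegrable f' MeasureTheory.volume a b) {e : E} (he : ‖e‖ ≤ 1) :
    ∫ x in a..b, ⟪e, f' x⟫ ≤ ‖f b - f a‖ := by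
  have hftc : ∫ x in a..b, f' x = f b - f a :=
    intervalIntegral.integral_eq_sub_of_hasDeriv_right_of_le hab
      (fun x hx => (hf x hx).continuousWithinAt)
      (fun x hx => (hf x (Ioo_subset_Icc_self hx)).mono_of_mem_nhdsWithin
        (Icc_mem_nhdsGT_of_mem ⟨hx.1.le, hx.2⟩)) hf'
  calc ∫ x in a..b, ⟪e, f' x⟫ = ⟪e, f b - f a⟫ := by
        rw [← hftc]; exact (innerSL ℝ e).intervalIntegral_comp_comm hf'
    _ ≤ ‖e‖ * ‖f b - f a‖ := real_inner_le_norm _ _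
    _ ≤ ‖f b - f a‖ := mul_le_of_le_one_left (norm_nonneg _) he

end

theorem integral_cos_one_div_mul_sub {r : ℝ} (hr : r ≠ 0) :
    ∫ t in 0..π * r, cos (1 / r * (t - π * r / 2)) = 2 * r := by
  simp_rw [mul_sub]
  rw [intervalIntegral.integral_comp_mul_sub cos (one_div_ne_zero hr), integral_cos,
    show 1 / r * (π * r) - 1 / r * (π * r / 2) = π / 2 by field_simp; ring,
    show 1 / r * 0 - 1 / r * (π * r / 2) = -(π / 2) by field_simp; ring, sin_neg, sin_pi_div_two,
    smul_eq_mul, one_div, inv_inv]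
  ring

/-- **Bow Lemma, Euclidean case (inequality).**
If `γ : [0, πr] → ℝⁿ` is a C² unit-speed curve whose curvature `‖γ''‖` is at most `1/r`,
then its chord length is at least `2r`, the chord length of the comparison half-circle
of radius `r`. -/
theorem bow_lemma_euclidean {n : ℕ} (r : ℝ) (hr : 0 < r)
    (γ : ℝ → EuclideanSpace ℝ (Fin n))
    (hγ : ContDiffOn ℝ 2 γ (Icc 0 (π * r)))
    (hspeed : ∀ t ∈ Icc 0 (π * r), ‖derivWithin γ (Icc 0 (π * r)) t‖ = 1)
    (hcurv : ∀ t ∈ Icc 0 (π * r),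
      ‖derivWithin (derivWithin γ (Icc 0 (π * r))) (Icc 0 (π * r)) t‖ ≤ 1 / r) :
    2 * r ≤ ‖γ (π * r) - γ 0‖ := by
  set s := Icc 0 (π * r)
  set v := derivWithin γ s
  have hL : 0 < π * r := by positivity
  have hv : ContDiffOn ℝ 1 v s := hγ.derivWithin (uniqueDiffOn_Icc hL) (by norm_num)
  have hm : π * r / 2 ∈ s := ⟨by positivity, by linarith⟩
  have hangle : ∀ t ∈ s, cos (1 / r * (t - π * r / 2)) ≤ ⟪v (π * r / 2), v t⟫ := fun t ht => by
    rw [real_inner_comm]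
    refine cos_mul_sub_le_inner_of_norm_deriv_le (by positivity)
      (fun t ht => (hv.differentiableOn one_ne_zero t ht).hasDerivWithinAt) hspeed hcurv hm ht ?_
    have hdist : |t - π * r / 2| ≤ π * r / 2 := abs_le.2 ⟨by linarith [ht.1], by linarith [ht.2]⟩
    rw [one_div, inv_mul_lt_iff₀ hr]
    linarith
  calc 2 * r = ∫ t in 0..π * r, cos (1 / r * (t - π * r / 2)) :=
        (integral_cos_one_div_mul_sub hr.ne').symm
    _ ≤ ∫ t in 0..π * r, ⟪v (π * r / 2), v t⟫ :=
        intervalIntegral.integral_mono_on hL.le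
          ((by fun_prop : Continuous _).intervalIntegrable _ _)
          ((continuousOn_const.inner hv.continuousOn).intervalIntegrable_of_Icc hL.le) hangle
    _ ≤ ‖γ (π * r) - γ 0‖ :=
        integral_inner_le_norm_sub hL.le
          (fun t ht => (hγ.differentiableOn two_ne_zero t ht).hasDerivWithinAt)
          (hv.continuousOn.intervalIntegrable_of_Icc hL.le)
          (hspeed _ hm).le
end

section
/- Let 0 < r ≤ π/2 and let γ : [0, π·sin r] → ℝ^{n+1} be a C² curve lying on the unit sphere (‖γ(t)‖ = 1 for all t), parametrized by arc length (‖γ'(t)‖ = 1 for all t), whose spherical geodesic curvature satisfies ‖γ''(t) + γ(t)‖ ≤ cot r for all t. Then the spherical distance between the endpoints is at least 2r; equivalently, ⟨γ(0), γ(π·sin r)⟩ ≤ cos(2r), where ⟨·,·⟩ is the Euclidean inner product. -/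
/-!
On the unit sphere a unit-speed curve has `⟪γ, γ''⟫ = -1`, so its ambient curvature satisfies
`‖γ''‖² = ‖γ'' + γ‖² + 1 ≤ cot² r + 1 = 1 / sin² r`. It therefore suffices to prove the Euclidean
bow lemma for curvature at most `K = 1 / sin r` and length `π / K`: the chord is at least
`2 sin r`, which for unit vectors means `⟪γ 0, γ T⟫ ≤ cos 2r`.

For the Euclidean bow lemma, let `e` be the unit tangent at the midpoint `m`. The unit tangent is a
curve on the sphere of speed at most `K`, so its angle to `e` is at most `K |t - m|`, i.e.
`⟪γ' t, e⟫ ≥ cos (K (t - m))`; integrating gives `⟪γ b - γ a, e⟫ ≥ 2 sin (K (b - a) / 2) / K`.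
The angle bound is an ODE comparison: `P = ⟪e, γ'⟫` has `P = 1` at the base point and
`|P'| ≤ K √(1 - P²)`, because `γ''` is orthogonal to `γ'`.
-/

open Real Set Filter Topology RealInnerProductSpace

theorem cos_le_of_neg_mul_sqrt_le_deriv {P P' : ℝ → ℝ} {a b K : ℝ} (hK : 0 ≤ K)
    (hKb : K * (b - a) < π) (hPc : ContinuousOn P (Icc a b))
    (hP : ∀ x ∈ Ico a b, HasDerivWithinAt P (P' x) (Ici x) x) (ha : P a = 1)
    (hP' : ∀ x ∈ Ico a b, -(K * √(1 - P x ^ 2)) ≤ P' x) :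
    ∀ t ∈ Icc a b, cos (K * (t - a)) ≤ P t := by
  intro t ht
  -- `P ≡ 1` also solves `P' = -K √(1 - P²)`, so compare `P` with the faster cosine
  -- `cos ((K + ε) (x - a) + ε)`, which starts strictly below `P`, and let `ε → 0`.
  have hsmall : ∀ᶠ ε in 𝓝[>] (0 : ℝ), (K + ε) * (b - a) + ε < π :=
    nhdsWithin_le_nhds <| Filter.Tendsto.eventually_lt_const (by simpa using hKb)
      (Continuous.tendsto' (by fun_prop) 0 _ rfl)
  have hlim : Tendsto (fun ε => cos ((K + ε) * (t - a) + ε)) (𝓝[>] 0) (𝓝 (cos (K * (t - a)))) :=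
    (Continuous.tendsto' (by fun_prop) 0 _ (by simp)).mono_left nhdsWithin_le_nhds
  refine le_of_tendsto hlim ?_
  filter_upwards [hsmall, self_mem_nhdsWithin] with ε hε (hε0 : 0 < ε)
  have hderiv : ∀ x, HasDerivAt (fun x => -cos ((K + ε) * (x - a) + ε))
      ((K + ε) * sin ((K + ε) * (x - a) + ε)) x := by
    intro x
    have := ((((hasDerivAt_id x).sub_const a).const_mul (K + ε)).add_const ε).cos.neg
    simpa [Pi.neg_def, mul_comm] using this
  refine neg_le_neg_iff.1 (image_le_of_deriv_right_lt_deriv_boundary' (f := fun x => -P x)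
    (f' := fun x => -P' x) hPc.neg (fun x hx => (hP x hx).neg) (by simpa [ha] using cos_le_one ε)
    (by fun_prop) (fun x _ => (hderiv x).hasDerivWithinAt) ?_ ht)
  intro x hx hPx
  have hθ0 : 0 < (K + ε) * (x - a) + ε := by nlinarith [hx.1]
  have hθπ : (K + ε) * (x - a) + ε < π := by nlinarith [hx.2]
  have hsin := sin_pos_of_pos_of_lt_pi hθ0 hθπ
  have hPx' : P x = cos ((K + ε) * (x - a) + ε) := by simpa using hPx
  have hbound := hP' x hx
  rw [hPx', ← sin_eq_sqrt_one_sub_cos_sq hθ0.le hθπ.le] at hbound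
  nlinarith

section InnerProductSpace

variable {E : Type*} [NormedAddCommGroup E] [InnerProductSpace ℝ E]

theorem inner_add_inner_eq_zero_of_inner_eq_const {f g f' g' : ℝ → E} {s : Set ℝ} {c : ℝ}
    (hs : UniqueDiffOn ℝ s) (hf : ∀ t ∈ s, HasDerivWithinAt f (f' t) s t)
    (hg : ∀ t ∈ s, HasDerivWithinAt g (g' t) s t) (hc : ∀ t ∈ s, ⟪f t, g t⟫ = c) :
    ∀ t ∈ s, ⟪f t, g' t⟫ + ⟪f' t, g t⟫ = 0 := fun t ht =>
  (hs t ht).eq_deriv s ((hf t ht).inner ℝ (hg t ht)) <|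
    (hasDerivWithinAt_const t s c).congr hc (hc t ht)

theorem inner_deriv_eq_zero_of_norm_eq_const {u u' : ℝ → E} {s : Set ℝ} {c : ℝ}
    (hs : UniqueDiffOn ℝ s) (hu : ∀ t ∈ s, HasDerivWithinAt u (u' t) s t)
    (hc : ∀ t ∈ s, ‖u t‖ = c) : ∀ t ∈ s, ⟪u t, u' t⟫ = 0 := by
  intro t ht
  have := inner_add_inner_eq_zero_of_inner_eq_const hs hu hu
    (fun t ht => by rw [real_inner_self_eq_norm_sq, hc t ht]) t ht
  linarith [real_inner_comm (u t) (u' t)]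

theorem abs_inner_le_norm_mul_sqrt_of_inner_eq_zero {e v w : E} (hv : ‖v‖ = 1)
    (hw : ⟪v, w⟫ = 0) : |⟪e, w⟫| ≤ ‖w‖ * √(‖e‖ ^ 2 - ⟪e, v⟫ ^ 2) := by
  have hproj : ‖e - ⟪e, v⟫ • v‖ = √(‖e‖ ^ 2 - ⟪e, v⟫ ^ 2) := by
    rw [← sqrt_sq (norm_nonneg _), norm_sub_sq_real, norm_smul, real_inner_smul_right, hv,
      Real.norm_eq_abs, mul_one, sq_abs]
    ring_nf
  calc |⟪e, w⟫| = |⟪e - ⟪e, v⟫ • v, w⟫| := by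
        rw [inner_sub_left, real_inner_smul_left, hw, mul_zero, sub_zero]
    _ ≤ ‖e - ⟪e, v⟫ • v‖ * ‖w‖ := abs_real_inner_le_norm _ _
    _ = ‖w‖ * √(‖e‖ ^ 2 - ⟪e, v⟫ ^ 2) := by rw [hproj, mul_comm]

theorem cos_le_inner_of_norm_deriv_le {u u' : ℝ → E} {a b K : ℝ} (hK : 0 ≤ K)
    (hKb : K * (b - a) < π) (hu : ∀ t ∈ Icc a b, HasDerivWithinAt u (u' t) (Icc a b) t)
    (hnorm : ∀ t ∈ Icc a b, ‖u t‖ = 1) (hu' : ∀ t ∈ Icc a b, ‖u' t‖ ≤ K) :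
    ∀ t ∈ Icc a b, cos (K * (t - a)) ≤ ⟪u a, u t⟫ := by
  intro t ht
  have ha : a ∈ Icc a b := ⟨le_rfl, ht.1.trans ht.2⟩
  have hP : ∀ x ∈ Icc a b, HasDerivWithinAt (fun t => ⟪u a, u t⟫) ⟪u a, u' x⟫ (Icc a b) x :=
    fun x hx => by simpa using (hasDerivWithinAt_const x _ (u a)).inner ℝ (hu x hx)
  refine cos_le_of_neg_mul_sqrt_le_deriv hK hKb (fun x hx => (hP x hx).continuousWithinAt)
    (fun x hx => (hP x (Ico_subset_Icc_self hx)).mono_of_mem_nhdsWithin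
      (Icc_mem_nhdsGE_of_mem hx)) (by simp [hnorm a ha]) ?_ t ht
  intro x hx
  have hxI := Ico_subset_Icc_self hx
  have horth := inner_deriv_eq_zero_of_norm_eq_const (uniqueDiffOn_Icc (hx.1.trans_lt hx.2)) hu
    hnorm x hxI
  have hcomp := abs_inner_le_norm_mul_sqrt_of_inner_eq_zero (e := u a) (hnorm x hxI) horth
  rw [hnorm a ha, one_pow] at hcomp
  have hKbound := mul_le_mul_of_nonneg_right (hu' x hxI) (sqrt_nonneg (1 - ⟪u a, u x⟫ ^ 2))
  linarith [neg_abs_le ⟪u a, u' x⟫]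

theorem sq_norm_deriv2_eq_sq_norm_add_one {γ v v' : ℝ → E} {s : Set ℝ} (hs : UniqueDiffOn ℝ s)
    (hγ : ∀ t ∈ s, HasDerivWithinAt γ (v t) s t) (hv : ∀ t ∈ s, HasDerivWithinAt v (v' t) s t)
    (hsphere : ∀ t ∈ s, ‖γ t‖ = 1) (hspeed : ∀ t ∈ s, ‖v t‖ = 1) :
    ∀ t ∈ s, ‖v' t‖ ^ 2 = ‖v' t + γ t‖ ^ 2 + 1 := by
  intro t ht
  have h := inner_add_inner_eq_zero_of_inner_eq_const hs hγ hv
    (inner_deriv_eq_zero_of_norm_eq_const hs hγ hsphere) t ht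
  rw [real_inner_self_eq_norm_sq, hspeed t ht] at h
  rw [norm_add_sq_real, hsphere t ht, real_inner_comm]
  linarith

theorem two_mul_sin_div_le_norm_sub_of_norm_deriv_le {γ v v' : ℝ → E} {a b K : ℝ} (hK : 0 < K)
    (hab : a ≤ b) (hKb : K * (b - a) < 2 * π)
    (hγ : ∀ t ∈ Icc a b, HasDerivWithinAt γ (v t) (Icc a b) t)
    (hv : ∀ t ∈ Icc a b, HasDerivWithinAt v (v' t) (Icc a b) t)
    (hspeed : ∀ t ∈ Icc a b, ‖v t‖ = 1) (hv' : ∀ t ∈ Icc a b, ‖v' t‖ ≤ K) :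
    2 * sin (K * (b - a) / 2) / K ≤ ‖γ b - γ a‖ := by
  set m := (a + b) / 2 with hm
  have hmI : m ∈ Icc a b := ⟨by linarith, by linarith⟩
  have hcos : ∀ t ∈ Icc a b, cos (K * (t - m)) ≤ ⟪v t, v m⟫ := by
    intro t ht
    rcases le_total t m with htm | hmt
    · have hsub : Icc t m ⊆ Icc a b := Icc_subset_Icc ht.1 hmI.2
      have hangle := cos_le_inner_of_norm_deriv_le hK.le (by nlinarith [ht.1])
        (fun s hs => (hv s (hsub hs)).mono hsub) (fun s hs => hspeed s (hsub hs))
        (fun s hs => hv' s (hsub hs)) m ⟨htm, le_rfl⟩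
      rwa [← cos_neg, show -(K * (m - t)) = K * (t - m) by ring] at hangle
    · have hsub : Icc m b ⊆ Icc a b := Icc_subset_Icc hmI.1 le_rfl
      have hangle := cos_le_inner_of_norm_deriv_le hK.le (by nlinarith [ht.2])
        (fun s hs => (hv s (hsub hs)).mono hsub) (fun s hs => hspeed s (hsub hs))
        (fun s hs => hv' s (hsub hs)) t ⟨hmt, ht.2⟩
      rw [real_inner_comm]
      exact hangle
  have hderiv : ∀ t ∈ Icc a b, HasDerivWithinAt (fun t => ⟪γ t, v m⟫ - sin (K * (t - m)) / K)
      (⟪v t, v m⟫ - cos (K * (t - m))) (Icc a b) t := by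
    intro t ht
    have h1 := (hγ t ht).inner ℝ (hasDerivWithinAt_const t _ (v m))
    have h2 := ((((hasDerivAt_id t).sub_const m).const_mul K).sin.div_const K).hasDerivWithinAt
      (s := Icc a b)
    have h := h1.sub h2
    simp only [inner_zero_right, zero_add, id, mul_one] at h
    exact h.congr_deriv (by field_simp)
  have hmono : MonotoneOn (fun t => ⟪γ t, v m⟫ - sin (K * (t - m)) / K) (Icc a b) :=
    monotoneOn_of_hasDerivWithinAt_nonneg (convex_Icc a b)
      (fun t ht => (hderiv t ht).continuousWithinAt)
      (fun t ht => (hderiv t (interior_subset ht)).mono interior_subset)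
      (fun t ht => sub_nonneg.2 (hcos t (interior_subset ht)))
  have hends := hmono ⟨le_rfl, hab⟩ ⟨hab, le_rfl⟩ hab
  dsimp only at hends
  rw [show K * (b - m) = K * (b - a) / 2 by ring, show K * (a - m) = -(K * (b - a) / 2) by ring,
    sin_neg, neg_div] at hends
  calc 2 * sin (K * (b - a) / 2) / K
      ≤ ⟪γ b - γ a, v m⟫ := by rw [mul_div_assoc, inner_sub_left]; linarith
    _ ≤ ‖γ b - γ a‖ * ‖v m‖ := real_inner_le_norm _ _
    _ = ‖γ b - γ a‖ := by rw [hspeed m hmI, mul_one]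

theorem inner_le_cos_two_mul_of_two_mul_sin_le_norm_sub {x y : E} {r : ℝ} (hx : ‖x‖ = 1)
    (hy : ‖y‖ = 1) (hr : 0 ≤ sin r) (h : 2 * sin r ≤ ‖y - x‖) : ⟪x, y⟫ ≤ cos (2 * r) := by
  have hsq := pow_le_pow_left₀ (by positivity) h 2
  rw [norm_sub_sq_real, hx, hy, real_inner_comm] at hsq
  rw [cos_two_mul, cos_sq']
  linarith

end InnerProductSpace

/-- **Bow Lemma, spherical case (inequality).**
Let `0 < r ≤ π/2` and let `γ : [0, π sin r] → Sⁿ ⊂ ℝ^{n+1}` be a C² unit-speed curve on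
the unit sphere whose spherical geodesic curvature `‖γ'' + γ‖` is at most `cot r`.
Then the spherical distance between the endpoints is at least `2r`, i.e.
`⟨γ 0, γ (π sin r)⟩ ≤ cos (2r)`. -/
theorem bow_lemma_spherical {n : ℕ} (r : ℝ) (hr : 0 < r) (hr' : r ≤ π / 2)
    (γ : ℝ → EuclideanSpace ℝ (Fin (n + 1)))
    (hγ : ContDiffOn ℝ 2 γ (Icc 0 (π * Real.sin r)))
    (hsphere : ∀ t ∈ Icc 0 (π * Real.sin r), ‖γ t‖ = 1)
    (hspeed : ∀ t ∈ Icc 0 (π * Real.sin r),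
      ‖derivWithin γ (Icc 0 (π * Real.sin r)) t‖ = 1)
    (hcurv : ∀ t ∈ Icc 0 (π * Real.sin r),
      ‖derivWithin (derivWithin γ (Icc 0 (π * Real.sin r))) (Icc 0 (π * Real.sin r)) t
        + γ t‖ ≤ Real.cot r) :
    (inner ℝ (γ 0) (γ (π * Real.sin r)) : ℝ) ≤ Real.cos (2 * r) := by
  have hsin : 0 < sin r := sin_pos_of_pos_of_lt_pi hr (by linarith [pi_pos])
  set T := π * sin r with hT_def
  have hT : 0 < T := by positivity
  have hI : UniqueDiffOn ℝ (Icc 0 T) := uniqueDiffOn_Icc hT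
  have hvel : ∀ t ∈ Icc 0 T, HasDerivWithinAt γ (derivWithin γ (Icc 0 T) t) (Icc 0 T) t :=
    fun t ht => (hγ.differentiableOn (by norm_num) t ht).hasDerivWithinAt
  have hacc : ∀ t ∈ Icc 0 T, HasDerivWithinAt (derivWithin γ (Icc 0 T))
      (derivWithin (derivWithin γ (Icc 0 T)) (Icc 0 T) t) (Icc 0 T) t := fun t ht =>
    ((hγ.derivWithin hI (by norm_num)).differentiableOn one_ne_zero t ht).hasDerivWithinAt
  have hcot : cot r ^ 2 + 1 = (sin r)⁻¹ ^ 2 := by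
    rw [cot_eq_cos_div_sin]
    field_simp
    linarith [cos_sq_add_sin_sq r]
  have hcurvature : ∀ t ∈ Icc 0 T,
      ‖derivWithin (derivWithin γ (Icc 0 T)) (Icc 0 T) t‖ ≤ (sin r)⁻¹ := by
    intro t ht
    rw [← pow_le_pow_iff_left₀ (norm_nonneg _) (by positivity) two_ne_zero,
      sq_norm_deriv2_eq_sq_norm_add_one hI hvel hacc hsphere hspeed t ht, ← hcot]
    gcongr
    exact hcurv t ht
  have hchord := two_mul_sin_div_le_norm_sub_of_norm_deriv_le (inv_pos.2 hsin) hT.le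
    (by field_simp; linarith [pi_pos]) hvel hacc hspeed hcurvature
  rw [show (sin r)⁻¹ * (T - 0) / 2 = π / 2 by rw [hT_def, sub_zero]; field_simp,
    sin_pi_div_two, mul_one, div_inv_eq_mul] at hchord
  exact inner_le_cos_two_mul_of_two_mul_sin_le_norm_sub (hsphere 0 ⟨le_rfl, hT.le⟩)
    (hsphere T ⟨hT.le, le_rfl⟩) hsin.le hchord
end

section
/- Let 0 < r ≤ π/2 and let γ : [0, π·sin r] → ℝ^{n+1} be a C² unit-speed curve on the unit sphere (‖γ(t)‖ = 1, ‖γ'(t)‖ = 1 for all t) with ‖γ''(t) + γ(t)‖ ≤ cot r for all t. If equality ⟨γ(0), γ(π·sin r)⟩ = cos(2r) holds, then the image of γ is contained in a 2-dimensional affine subspace of ℝ^{n+1}; in particular γ is contained in a planar circle (the intersection of the unit sphere with a 2-dimensional affine subspace). -/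
/-!
Put `m = 1 / sin r` and `L = π sin r`, so that `m L = π`. For a unit-speed curve on the unit
sphere `⟪γ, γ''⟫ = -1`, so `γ'' + γ ⊥ γ` and the curvature bound becomes
`‖γ'' + m² γ‖ ≤ m² cos r` in the ambient space. Integration by parts gives
`∫₀ᴸ sin (m t) (γ'' + m² γ) = m (γ 0 + γ L) = 2 m p` with `p` the midpoint of the endpoints, and
the endpoint condition says exactly `‖p‖ = cos r`. Pairing with `p`, the nonnegative function
`sin (m t) (m² ‖p‖² - ⟪p, γ'' + m² γ⟫)` has integral zero, which forces `γ'' + m² γ = m² p`.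
The solution of this equation is the circle `p + cos (m t) a + sin (m t) b`, and `a ⊥ b`
because this circle lies on the unit sphere.
-/

open Real Set MeasureTheory RealInnerProductSpace

theorem eqOn_zero_of_integral_eq_zero {φ : ℝ → ℝ} {a b : ℝ} (hab : a ≤ b)
    (hφ : ContinuousOn φ (Icc a b)) (hφ₀ : ∀ t ∈ Icc a b, 0 ≤ φ t)
    (hint : ∫ t in a..b, φ t = 0) : EqOn φ 0 (Ioo a b) := by
  have hae : φ =ᵐ[volume.restrict (Ioc a b)] 0 :=
    (intervalIntegral.integral_eq_zero_iff_of_le_of_nonneg_ae hab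
      ((ae_restrict_mem measurableSet_Ioc).mono fun t ht ↦ hφ₀ t (Ioc_subset_Icc_self ht))
      (hφ.intervalIntegrable_of_Icc hab)).1 hint
  exact Measure.eqOn_open_of_ae_eq (ae_restrict_of_ae_restrict_of_subset Ioo_subset_Ioc_self hae)
    isOpen_Ioo (hφ.mono Ioo_subset_Icc_self) continuousOn_const

theorem integral_sin_mul_of_mul_eq_pi {m L : ℝ} (hm : 0 < m) (hmL : m * L = π) :
    ∫ t in (0 : ℝ)..L, sin (m * t) = 2 / m := by
  rw [intervalIntegral.integral_comp_mul_left (fun t ↦ sin t) hm.ne', integral_sin, hmL,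
    mul_zero, cos_zero, cos_pi, smul_eq_mul]
  ring

section Derivatives

variable {E : Type*} [NormedAddCommGroup E] [NormedSpace ℝ E]

theorem HasDerivWithinAt.eq_zero_of_eqOn_const {f : ℝ → E} {f' c : E} {s : Set ℝ} {t : ℝ}
    (hf : HasDerivWithinAt f f' s t) (hs : UniqueDiffWithinAt ℝ s t) (hc : EqOn f (fun _ ↦ c) s)
    (ht : t ∈ s) : f' = 0 :=
  hs.eq_deriv s hf ((hasDerivWithinAt_const t s c).congr hc (hc ht))

theorem integral_sin_mul_smul_second_deriv_add [CompleteSpace E] {γ γ' γ'' : ℝ → E} {a b m : ℝ}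
    (hab : a ≤ b) (hγ : ∀ t ∈ Icc a b, HasDerivWithinAt γ (γ' t) (Icc a b) t)
    (hγ' : ∀ t ∈ Icc a b, HasDerivWithinAt γ' (γ'' t) (Icc a b) t)
    (hγ'' : ContinuousOn γ'' (Icc a b)) :
    ∫ t in a..b, sin (m * t) • (γ'' t + m ^ 2 • γ t) =
      (sin (m * b) • γ' b - (m * cos (m * b)) • γ b) -
        (sin (m * a) • γ' a - (m * cos (m * a)) • γ a) := by
  have hγc : ContinuousOn γ (Icc a b) := fun t ht ↦ (hγ t ht).continuousWithinAt
  have hγ'c : ContinuousOn γ' (Icc a b) := fun t ht ↦ (hγ' t ht).continuousWithinAt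
  refine intervalIntegral.integral_eq_sub_of_hasDeriv_right_of_le hab
    (f := fun t ↦ sin (m * t) • γ' t - (m * cos (m * t)) • γ t) (by fun_prop) (fun t ht ↦ ?_)
    (ContinuousOn.intervalIntegrable_of_Icc hab (by fun_prop))
  have hI : Icc a b ∈ nhds t := Icc_mem_nhds ht.1 ht.2
  have hsin : HasDerivAt (fun t ↦ sin (m * t)) (m * cos (m * t)) t := by
    simpa [mul_comm] using ((hasDerivAt_id t).const_mul m).sin
  have hcos : HasDerivAt (fun t ↦ m * cos (m * t)) (-(m ^ 2 * sin (m * t))) t := by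
    refine ((((hasDerivAt_id t).const_mul m).cos).const_mul m).congr_deriv ?_
    simp only [id, mul_one]; ring
  refine ((hsin.smul ((hγ' t (Ioo_subset_Icc_self ht)).hasDerivAt hI)).sub
    (hcos.smul ((hγ t (Ioo_subset_Icc_self ht)).hasDerivAt hI))).hasDerivWithinAt.congr_deriv ?_
  simp only [smul_add, smul_smul]
  module

end Derivatives

section InnerProduct

variable {F : Type*} [NormedAddCommGroup F] [InnerProductSpace ℝ F]

theorem HasDerivWithinAt.const_inner {γ : ℝ → F} {v : F} {s : Set ℝ} {t : ℝ} (p : F)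
    (hγ : HasDerivWithinAt γ v s t) : HasDerivWithinAt (fun u ↦ ⟪p, γ u⟫) ⟪p, v⟫ s t := by
  simpa using (hasDerivWithinAt_const t s p).inner ℝ hγ

theorem eq_smul_of_norm_le_of_inner_ge {p v : F} {μ : ℝ} (hμ : 0 ≤ μ) (hv : ‖v‖ ≤ μ * ‖p‖)
    (hpv : μ * ‖p‖ ^ 2 ≤ ⟪p, v⟫) : v = μ • p := by
  have hle := real_inner_le_norm p v
  have hsq : ‖v - μ • p‖ ^ 2 ≤ 0 := by
    rw [norm_sub_sq_real, real_inner_smul_right, norm_smul, Real.norm_eq_abs, mul_pow, sq_abs,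
      real_inner_comm]
    nlinarith [pow_le_pow_left₀ (norm_nonneg v) hv 2, mul_le_mul_of_nonneg_left hpv hμ]
  exact sub_eq_zero.1 (norm_eq_zero.1 (by nlinarith [norm_nonneg (v - μ • p)]))

theorem norm_add_sq_smul_le_of_inner_eq_neg_one {x y : F} {κ m : ℝ} (hx : ‖x‖ = 1)
    (hxy : ⟪x, y⟫ = -1) (hy : ‖y + x‖ ≤ κ) (hm : 0 ≤ m) (hmκ : m ^ 2 = 1 + κ ^ 2) :
    ‖y + m ^ 2 • x‖ ≤ κ * m := by
  have horth : ⟪y + x, x⟫ = 0 := by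
    rw [inner_add_left, real_inner_comm, hxy, real_inner_self_eq_norm_sq, hx]; ring
  have hsq : ‖y + m ^ 2 • x‖ ^ 2 = ‖y + x‖ ^ 2 + κ ^ 4 := by
    rw [show y + m ^ 2 • x = (y + x) + κ ^ 2 • x by rw [hmκ]; module, norm_add_sq_real,
      real_inner_smul_right, horth, norm_smul, hx, Real.norm_eq_abs, abs_sq]
    ring
  have hκ : 0 ≤ κ := (norm_nonneg _).trans hy
  refine abs_le_of_sq_le_sq' ?_ (by positivity) |>.2
  nlinarith [norm_nonneg (y + x)]

theorem norm_midpoint_of_inner_eq_cos_two_mul {x y : F} {r : ℝ} (hx : ‖x‖ = 1) (hy : ‖y‖ = 1)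
    (hxy : ⟪x, y⟫ = cos (2 * r)) :
    ‖midpoint ℝ x y‖ = |cos r| ∧ ‖x - midpoint ℝ x y‖ = |sin r| := by
  have hsq : sin r ^ 2 + cos r ^ 2 = 1 := sin_sq_add_cos_sq r
  rw [cos_two_mul] at hxy
  constructor <;> refine (sq_eq_sq₀ (norm_nonneg _) (abs_nonneg _)).1 ?_ <;> rw [sq_abs]
  · rw [midpoint_eq_smul_add, norm_smul, mul_pow, norm_add_sq_real, hx, hy, hxy]
    norm_num
    ring
  · rw [left_sub_midpoint, norm_smul, mul_pow, norm_sub_sq_real, hx, hy, hxy]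
    norm_num
    linear_combination -hsq

theorem exists_affineSubspace_finrank_eq_two {a b : F} (p : F) (ha : a ≠ 0) (hb : b ≠ 0)
    (hab : ⟪a, b⟫ = 0) :
    ∃ A : AffineSubspace ℝ F, Module.finrank ℝ A.direction = 2 ∧
      ∀ x y : ℝ, p + x • a + y • b ∈ A := by
  have hli : LinearIndependent ℝ ![a, b] :=
    linearIndependent_of_ne_zero_of_inner_eq_zero (by simp [Fin.forall_fin_two, ha, hb])
      (fun i j hij ↦ by fin_cases i <;> fin_cases j <;> simp_all [real_inner_comm])
  refine ⟨AffineSubspace.mk' p (Submodule.span ℝ (range ![a, b])), ?_, fun x y ↦ ?_⟩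
  · rw [AffineSubspace.direction_mk', finrank_span_eq_card hli, Fintype.card_fin]
  · rw [AffineSubspace.mem_mk', vsub_eq_sub, add_assoc, add_sub_cancel_left]
    exact add_mem (Submodule.smul_mem _ _ (Submodule.subset_span ⟨0, rfl⟩))
      (Submodule.smul_mem _ _ (Submodule.subset_span ⟨1, rfl⟩))

section Curves

variable {γ γ' γ'' : ℝ → F}

theorem inner_deriv_eq_zero_of_norm_eq {s : Set ℝ} {R : ℝ} (hs : UniqueDiffOn ℝ s)
    (hγ : ∀ t ∈ s, HasDerivWithinAt γ (γ' t) s t) (hR : ∀ t ∈ s, ‖γ t‖ = R) {t : ℝ}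
    (ht : t ∈ s) : ⟪γ t, γ' t⟫ = 0 := by
  have h := ((hγ t ht).inner ℝ (hγ t ht)).eq_zero_of_eqOn_const (hs t ht) (c := R ^ 2)
    (fun u hu ↦ by simp only [real_inner_self_eq_norm_sq, hR u hu]) ht
  rw [real_inner_comm (γ t)] at h
  linarith

theorem inner_second_deriv_eq_neg_one {s : Set ℝ} (hs : UniqueDiffOn ℝ s)
    (hγ : ∀ t ∈ s, HasDerivWithinAt γ (γ' t) s t) (hγ' : ∀ t ∈ s, HasDerivWithinAt γ' (γ'' t) s t)
    (hsphere : ∀ t ∈ s, ‖γ t‖ = 1) (hspeed : ∀ t ∈ s, ‖γ' t‖ = 1) {t : ℝ} (ht : t ∈ s) :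
    ⟪γ t, γ'' t⟫ = -1 := by
  have h := ((hγ t ht).inner ℝ (hγ' t ht)).eq_zero_of_eqOn_const (hs t ht) (c := 0)
    (fun u hu ↦ inner_deriv_eq_zero_of_norm_eq hs hγ hsphere hu) ht
  rw [real_inner_self_eq_norm_sq, hspeed t ht] at h
  linarith

/-- Conservation of the energy `‖x'‖² + m² ‖x‖²`. -/
theorem eqOn_zero_of_second_deriv_eq_neg_sq_smul {x x' : ℝ → F} {m a b : ℝ} (hm : m ≠ 0)
    (hx : ∀ t ∈ Icc a b, HasDerivWithinAt x (x' t) (Icc a b) t)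
    (hx' : ∀ t ∈ Icc a b, HasDerivWithinAt x' (-m ^ 2 • x t) (Icc a b) t)
    (ha : x a = 0) (ha' : x' a = 0) : EqOn x 0 (Icc a b) := by
  set energy := fun t ↦ ⟪x' t, x' t⟫ + m ^ 2 * ⟪x t, x t⟫
  have hconst := constant_of_has_deriv_right_zero (f := energy)
    (fun t ht ↦ (((hx' t ht).inner ℝ (hx' t ht)).add
      (((hx t ht).inner ℝ (hx t ht)).const_mul _)).continuousWithinAt)
    (fun t ht ↦ ?_)
  · intro t ht
    have h : ‖x' t‖ ^ 2 + m ^ 2 * ‖x t‖ ^ 2 = 0 := by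
      simpa [energy, ha, ha', real_inner_self_eq_norm_sq] using hconst t ht
    simpa [hm] using ((add_eq_zero_iff_of_nonneg (by positivity) (by positivity)).1 h).2
  · have ht' := Ico_subset_Icc_self ht
    refine ((((hx' t ht').inner ℝ (hx' t ht')).add
      (((hx t ht').inner ℝ (hx t ht')).const_mul _)).congr_deriv ?_).mono_of_mem_nhdsWithin
      (Icc_mem_nhdsGE_of_mem ht)
    simp only [inner_smul_left, inner_smul_right, real_inner_comm (x t), RCLike.conj_to_real]
    ring

theorem eq_cos_smul_add_sin_smul_of_second_deriv_add_sq_smul_eq {p : F} {m L : ℝ}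
    (hm : m ≠ 0)
    (hγ : ∀ t ∈ Icc 0 L, HasDerivWithinAt γ (γ' t) (Icc 0 L) t)
    (hγ' : ∀ t ∈ Icc 0 L, HasDerivWithinAt γ' (γ'' t) (Icc 0 L) t)
    (hode : ∀ t ∈ Icc 0 L, γ'' t + m ^ 2 • γ t = m ^ 2 • p) :
    ∀ t ∈ Icc 0 L, γ t = p + cos (m * t) • (γ 0 - p) + sin (m * t) • m⁻¹ • γ' 0 := by
  have hcos : ∀ t, HasDerivAt (fun t ↦ cos (m * t)) (-(m * sin (m * t))) t := fun t ↦ by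
    simpa [mul_comm] using ((hasDerivAt_id t).const_mul m).cos
  have hsin : ∀ t, HasDerivAt (fun t ↦ sin (m * t)) (m * cos (m * t)) t := fun t ↦ by
    simpa [mul_comm] using ((hasDerivAt_id t).const_mul m).sin
  have hzero := eqOn_zero_of_second_deriv_eq_neg_sq_smul (a := 0) (b := L) hm
    (x := fun t ↦ γ t - (p + cos (m * t) • (γ 0 - p) + sin (m * t) • m⁻¹ • γ' 0))
    (x' := fun t ↦ γ' t - (-(m * sin (m * t)) • (γ 0 - p) + (m * cos (m * t)) • m⁻¹ • γ' 0))
    (fun t ht ↦ ((hγ t ht).sub ((((hcos t).smul_const _).const_add p).add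
      ((hsin t).smul_const _)).hasDerivWithinAt).congr_deriv (by simp))
    (fun t ht ↦ ((hγ' t ht).sub ((((hsin t).const_mul m).neg.smul_const _).add
      (((hcos t).const_mul m).smul_const _)).hasDerivWithinAt).congr_deriv ?_) ?_ ?_
  · exact fun t ht ↦ sub_eq_zero.1 (hzero ht)
  · rw [eq_sub_of_add_eq (hode t ht)]
    module
  · simp
  · simp [smul_smul, hm]

theorem integral_sin_mul_inner_midpoint {m L : ℝ} (hL : 0 ≤ L) (hmL : m * L = π)
    (hγ : ∀ t ∈ Icc 0 L, HasDerivWithinAt γ (γ' t) (Icc 0 L) t)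
    (hγ' : ∀ t ∈ Icc 0 L, HasDerivWithinAt γ' (γ'' t) (Icc 0 L) t)
    (hγ'' : ContinuousOn γ'' (Icc 0 L)) :
    ∫ t in (0 : ℝ)..L, sin (m * t) * ⟪midpoint ℝ (γ 0) (γ L), γ'' t + m ^ 2 • γ t⟫ =
      2 * m * ‖midpoint ℝ (γ 0) (γ L)‖ ^ 2 := by
  set p := midpoint ℝ (γ 0) (γ L) with hp
  have h := integral_sin_mul_smul_second_deriv_add (m := m) hL
    (fun t ht ↦ (hγ t ht).const_inner p) (fun t ht ↦ (hγ' t ht).const_inner p)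
    (continuousOn_const.inner hγ'')
  simp only [smul_eq_mul, hmL, mul_zero, sin_zero, cos_zero, sin_pi, cos_pi] at h
  have hsum : ⟪p, γ 0⟫ + ⟪p, γ L⟫ = 2 * ‖p‖ ^ 2 := by
    rw [← inner_add_right, ← midpoint_add_self (R := ℝ), ← hp, inner_add_right,
      real_inner_self_eq_norm_sq]
    ring
  simp only [inner_add_right, real_inner_smul_right, h]
  linear_combination m * hsum

theorem second_deriv_add_sq_smul_eq_of_norm_le {m L : ℝ} (hm : 0 < m) (hmL : m * L = π)
    (hγ : ∀ t ∈ Icc 0 L, HasDerivWithinAt γ (γ' t) (Icc 0 L) t)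
    (hγ' : ∀ t ∈ Icc 0 L, HasDerivWithinAt γ' (γ'' t) (Icc 0 L) t)
    (hγ'' : ContinuousOn γ'' (Icc 0 L))
    (hbound : ∀ t ∈ Icc 0 L, ‖γ'' t + m ^ 2 • γ t‖ ≤ m ^ 2 * ‖midpoint ℝ (γ 0) (γ L)‖) :
    ∀ t ∈ Icc 0 L, γ'' t + m ^ 2 • γ t = m ^ 2 • midpoint ℝ (γ 0) (γ L) := by
  set p := midpoint ℝ (γ 0) (γ L)
  have hL : 0 < L := by by_contra! h; nlinarith [pi_pos]
  have hγc : ContinuousOn γ (Icc 0 L) := fun t ht ↦ (hγ t ht).continuousWithinAt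
  have hφ : EqOn (fun t ↦ sin (m * t) * (m ^ 2 * ‖p‖ ^ 2 - ⟪p, γ'' t + m ^ 2 • γ t⟫)) 0
      (Ioo 0 L) := by
    refine eqOn_zero_of_integral_eq_zero hL.le (by fun_prop) (fun t ht ↦ ?_) ?_
    · refine mul_nonneg (sin_nonneg_of_nonneg_of_le_pi (by nlinarith [ht.1])
        (by nlinarith [ht.2])) (sub_nonneg.2 ?_)
      calc ⟪p, γ'' t + m ^ 2 • γ t⟫ ≤ ‖p‖ * ‖γ'' t + m ^ 2 • γ t‖ := real_inner_le_norm _ _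
        _ ≤ ‖p‖ * (m ^ 2 * ‖p‖) := by gcongr; exact hbound t ht
        _ = m ^ 2 * ‖p‖ ^ 2 := by ring
    · simp only [mul_sub]
      rw [intervalIntegral.integral_sub (Continuous.intervalIntegrable (by fun_prop) _ _)
        (ContinuousOn.intervalIntegrable_of_Icc hL.le (by fun_prop)),
        intervalIntegral.integral_mul_const, integral_sin_mul_of_mul_eq_pi hm hmL,
        integral_sin_mul_inner_midpoint hL.le hmL hγ hγ' hγ'']
      field_simp
      ring
  have hIoo : ∀ t ∈ Ioo 0 L, γ'' t + m ^ 2 • γ t = m ^ 2 • p := fun t ht ↦ by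
    have hsin : 0 < sin (m * t) := sin_pos_of_pos_of_lt_pi (mul_pos hm ht.1)
      (by rw [← hmL]; exact mul_lt_mul_of_pos_left ht.2 hm)
    have hinner : ⟪p, γ'' t + m ^ 2 • γ t⟫ = m ^ 2 * ‖p‖ ^ 2 := by
      have h := hφ ht
      simp only [Pi.zero_apply, mul_eq_zero, hsin.ne', false_or, sub_eq_zero] at h
      exact h.symm
    exact eq_smul_of_norm_le_of_inner_ge (sq_nonneg m) (hbound t (Ioo_subset_Icc_self ht))
      hinner.ge
  exact fun t ht ↦ EqOn.of_subset_closure (f := fun t ↦ γ'' t + m ^ 2 • γ t)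
    (fun t ht ↦ hIoo t ht) (by fun_prop) continuousOn_const Ioo_subset_Icc_self
    (closure_Ioo hL.ne).ge ht

theorem exists_affineSubspace_of_eq_cos_smul_add_sin_smul {p a b : F} {m L : ℝ} (hL : 0 ≤ L)
    (hmL : m * L = π) (hsphere : ∀ t ∈ Icc 0 L, ‖γ t‖ = 1)
    (hform : ∀ t ∈ Icc 0 L, γ t = p + cos (m * t) • a + sin (m * t) • b) (ha : a ≠ 0)
    (hba : ‖b‖ = ‖a‖) (hγb : ⟪γ 0, b⟫ = 0) :
    ∃ A : AffineSubspace ℝ F, Module.finrank ℝ A.direction = 2 ∧ ∀ t ∈ Icc 0 L, γ t ∈ A := by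
  have hγ0 : γ 0 = p + a := by simpa using hform 0 ⟨le_rfl, hL⟩
  have hγL : γ L = p - a := by simpa [hmL, sub_eq_add_neg] using hform L ⟨hL, le_rfl⟩
  have hγL2 : γ (L / 2) = p + b := by
    simpa [show m * (L / 2) = π / 2 by rw [← hmL]; ring]
      using hform (L / 2) ⟨by linarith, by linarith⟩
  have h0 := hsphere 0 ⟨le_rfl, hL⟩
  have hL' := hsphere L ⟨hL, le_rfl⟩
  have hL2 := hsphere (L / 2) ⟨by linarith, by linarith⟩
  rw [hγ0] at h0 hγb
  rw [hγL] at hL'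
  rw [hγL2] at hL2
  have hpa : ⟪p, a⟫ = 0 := by
    have := congrArg (· ^ 2) (h0.trans hL'.symm)
    simp only [norm_add_sq_real, norm_sub_sq_real] at this
    linarith
  have hpb : ⟪p, b⟫ = 0 := by
    have := congrArg (· ^ 2) (h0.trans hL2.symm)
    simp only [norm_add_sq_real, hba] at this
    linarith
  have hab : ⟪a, b⟫ = 0 := by rwa [inner_add_left, hpb, zero_add] at hγb
  obtain ⟨A, hA, hmem⟩ :=
    exists_affineSubspace_finrank_eq_two p ha (norm_ne_zero_iff.1 (hba ▸ norm_ne_zero_iff.2 ha)) hab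
  exact ⟨A, hA, fun t ht ↦ hform t ht ▸ hmem _ _⟩

end Curves

end InnerProduct

/-- **Bow Lemma, spherical case (rigidity).**
Let `0 < r ≤ π/2` and let `γ : [0, π sin r] → Sⁿ ⊂ ℝ^{n+1}` be a C² unit-speed curve on
the unit sphere with spherical geodesic curvature `‖γ'' + γ‖ ≤ cot r`.  If the endpoints
satisfy `⟨γ 0, γ (π sin r)⟩ = cos (2r)` (spherical distance exactly `2r`), then the image
of `γ` is contained in a 2-dimensional affine subspace of `ℝ^{n+1}`; in particular `γ`
is contained in a planar circle. -/
theorem bow_lemma_spherical_rigidity {n : ℕ} (r : ℝ) (hr : 0 < r) (hr' : r ≤ π / 2)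
    (γ : ℝ → EuclideanSpace ℝ (Fin (n + 1)))
    (hγ : ContDiffOn ℝ 2 γ (Icc 0 (π * Real.sin r)))
    (hsphere : ∀ t ∈ Icc 0 (π * Real.sin r), ‖γ t‖ = 1)
    (hspeed : ∀ t ∈ Icc 0 (π * Real.sin r),
      ‖derivWithin γ (Icc 0 (π * Real.sin r)) t‖ = 1)
    (hcurv : ∀ t ∈ Icc 0 (π * Real.sin r),
      ‖derivWithin (derivWithin γ (Icc 0 (π * Real.sin r))) (Icc 0 (π * Real.sin r)) t
        + γ t‖ ≤ Real.cot r)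
    (heq : (inner ℝ (γ 0) (γ (π * Real.sin r)) : ℝ) = Real.cos (2 * r)) :
    ∃ A : AffineSubspace ℝ (EuclideanSpace ℝ (Fin (n + 1))),
      Module.finrank ℝ A.direction = 2 ∧
      ∀ t ∈ Icc 0 (π * Real.sin r), γ t ∈ A := by
  set I := Icc 0 (π * sin r)
  have hs : 0 < sin r := sin_pos_of_pos_of_lt_pi hr (by linarith [pi_pos])
  have hc : 0 ≤ cos r := cos_nonneg_of_mem_Icc ⟨by linarith [pi_pos], hr'⟩
  have hL : 0 < π * sin r := by positivity
  have hmL : (sin r)⁻¹ * (π * sin r) = π := by field_simp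
  have hUD : UniqueDiffOn ℝ I := uniqueDiffOn_Icc hL
  have hγ' : ContDiffOn ℝ 1 (derivWithin γ I) I := hγ.derivWithin hUD (by norm_num)
  have hd1 : ∀ t ∈ I, HasDerivWithinAt γ (derivWithin γ I t) I t := fun t ht ↦
    (hγ.differentiableOn (by norm_num) t ht).hasDerivWithinAt
  have hd2 : ∀ t ∈ I, HasDerivWithinAt (derivWithin γ I) (derivWithin (derivWithin γ I) I t) I t :=
    fun t ht ↦ (hγ'.differentiableOn one_ne_zero t ht).hasDerivWithinAt
  obtain ⟨hp, ha⟩ := norm_midpoint_of_inner_eq_cos_two_mul (hsphere 0 ⟨le_rfl, hL.le⟩)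
    (hsphere _ ⟨hL.le, le_rfl⟩) heq
  have hbound : ∀ t ∈ I, ‖derivWithin (derivWithin γ I) I t + (sin r)⁻¹ ^ 2 • γ t‖ ≤
      (sin r)⁻¹ ^ 2 * ‖midpoint ℝ (γ 0) (γ (π * sin r))‖ := fun t ht ↦ by
    refine (norm_add_sq_smul_le_of_inner_eq_neg_one (m := (sin r)⁻¹) (hsphere t ht)
      (inner_second_deriv_eq_neg_one hUD hd1 hd2 hsphere hspeed ht) (hcurv t ht) (by positivity)
      ?_).trans_eq ?_
    · rw [cot_eq_cos_div_sin]; field_simp; linarith [sin_sq_add_cos_sq r]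
    · rw [hp, abs_of_nonneg hc, cot_eq_cos_div_sin]; ring
  have hform := eq_cos_smul_add_sin_smul_of_second_deriv_add_sq_smul_eq (inv_ne_zero hs.ne')
    hd1 hd2
    (second_deriv_add_sq_smul_eq_of_norm_le (inv_pos.2 hs) hmL hd1 hd2
      (hγ'.continuousOn_derivWithin hUD le_rfl) hbound)
  refine exists_affineSubspace_of_eq_cos_smul_add_sin_smul hL.le hmL hsphere hform
    (norm_ne_zero_iff.1 (by rw [ha]; exact (abs_pos.2 hs.ne').ne')) ?_ ?_
  · rw [ha, norm_smul, hspeed 0 ⟨le_rfl, hL.le⟩, norm_inv, norm_inv, inv_inv, Real.norm_eq_abs,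
      mul_one]
  · rw [real_inner_smul_right, inner_deriv_eq_zero_of_norm_eq hUD hd1 hsphere ⟨le_rfl, hL.le⟩,
      mul_zero]
end

section
/- Let γ : [0, π] → ℝ^{n+1} be a C¹ unit-speed curve on the unit sphere (‖γ(t)‖ = 1, ‖γ'(t)‖ = 1 for all t) whose endpoints are antipodal: γ(π) = −γ(0). Then γ is an arc of a great circle; explicitly, γ(t) = cos(t)·γ(0) + sin(t)·γ'(0) for all t ∈ [0, π]. -/
/-!
The angle `angle (γ s) (γ t)` is the spherical distance between `γ s` and `γ t`. By the
triangle inequality for angles and the chord formula `angle x y = 2 arcsin (‖x - y‖ / 2)`,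
it grows no faster than the speed, so `angle (γ s) (γ t) ≤ |t - s|`. Since
`angle (γ 0) (γ π) = π`, the triangle inequality forces equality everywhere, hence
`⟪γ s, γ t⟫ = cos (t - s)`. These are the inner products of the great circle
`t ↦ cos t • γ 0 + sin t • γ (π / 2)`, which is therefore `γ`, and differentiating at `0`
identifies `γ (π / 2)` with `γ'(0)`.
-/

open Real Set Filter Topology InnerProductGeometry
open scoped RealInnerProductSpace

section

variable {V : Type*} [NormedAddCommGroup V] [InnerProductSpace ℝ V]

theorem angle_eq_two_mul_arcsin_norm_sub_div_two {x y : V} (hx : ‖x‖ = 1) (hy : ‖y‖ = 1) :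
    angle x y = 2 * arcsin (‖x - y‖ / 2) := by
  have hchord : ‖x - y‖ ≤ 2 := by
    grw [norm_sub_le, hx, hy]; norm_num
  have hcos : ⟪x, y⟫ = cos (2 * arcsin (‖x - y‖ / 2)) := by
    rw [cos_two_mul, cos_sq', sin_arcsin (by linarith [norm_nonneg (x - y)]) (by linarith)]
    have := norm_sub_sq_real x y
    rw [hx, hy] at this
    linarith
  rw [angle, hx, hy, mul_one, div_one, hcos, arccos_cos]
  · exact mul_nonneg zero_le_two (arcsin_nonneg.mpr (by positivity))
  · linarith [arcsin_le_pi_div_two (‖x - y‖ / 2)]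

theorem eventually_two_mul_arcsin_sub_div_two_lt {x r : ℝ} (hr : 1 < r) :
    ∀ᶠ z in 𝓝[>] x, 2 * arcsin ((z - x) / 2) < r * (z - x) := by
  have hderiv : HasDerivAt (fun z => 2 * arcsin ((z - x) / 2)) 1 x := by
    have := (hasDerivAt_arcsin (x := 0) (by norm_num) (by norm_num)).comp_of_eq x
      (((hasDerivAt_id x).sub_const x).div_const 2) (by simp)
    simpa using this.const_mul 2
  have hslope := (hasDerivWithinAt_iff_tendsto_slope' self_notMem_Ioi).mp
    (hderiv.hasDerivWithinAt (s := Ioi x))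
  filter_upwards [hslope.eventually (gt_mem_nhds hr), self_mem_nhdsWithin] with z hz hxz
  rw [slope_def_field, sub_self, zero_div, arcsin_zero, mul_zero, sub_zero,
    div_lt_iff₀ (sub_pos.mpr hxz)] at hz
  exact hz

theorem angle_le_sub_of_lipschitzOnWith {γ : ℝ → V} {a b : ℝ} (hab : a ≤ b)
    (hsphere : ∀ t ∈ Icc a b, ‖γ t‖ = 1) (hγ : LipschitzOnWith 1 γ (Icc a b)) :
    angle (γ a) (γ b) ≤ b - a := by
  have hne : ∀ t ∈ Icc a b, γ t ≠ 0 := fun t ht => norm_ne_zero_iff.mp (by simp [hsphere t ht])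
  have ha : a ∈ Icc a b := ⟨le_rfl, hab⟩
  have hcont : ContinuousOn (fun t => angle (γ a) (γ t)) (Icc a b) := fun t ht =>
    (continuousAt_angle (x := (γ a, γ t)) (hne a ha) (hne t ht)).comp_continuousWithinAt
      (f := fun t => (γ a, γ t))
      (continuousWithinAt_const.prodMk (hγ.continuousOn t ht))
  refine image_le_of_liminf_slope_right_le_deriv_boundary hcont (B := fun t => t - a)
    (B' := fun _ => 1) (by simp [angle_self (hne a ha)]) (by fun_prop)
    (fun x _ => (hasDerivWithinAt_id x _).sub_const a) ?_ ⟨hab, le_rfl⟩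
  -- a bound on the lower right Dini derivative suffices, so `arccos` is never differentiated
  intro x hx r hr
  refine Eventually.frequently ?_
  filter_upwards [Ioc_mem_nhdsGT hx.2, eventually_two_mul_arcsin_sub_div_two_lt hr]
    with z hz hzr
  have hxI : x ∈ Icc a b := Ico_subset_Icc_self hx
  have hzI : z ∈ Icc a b := ⟨hx.1.trans hz.1.le, hz.2⟩
  have hchord : ‖γ x - γ z‖ ≤ z - x := by
    simpa [dist_eq_norm, abs_sub_comm x z, abs_of_pos (sub_pos.mpr hz.1)] using
      hγ.dist_le_mul x hxI z hzI
  rw [slope_def_field, div_lt_iff₀ (sub_pos.mpr hz.1)]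
  calc angle (γ a) (γ z) - angle (γ a) (γ x)
      ≤ angle (γ x) (γ z) := by linarith [angle_le_angle_add_angle (γ a) (γ x) (γ z)]
    _ = 2 * arcsin (‖γ x - γ z‖ / 2) :=
      angle_eq_two_mul_arcsin_norm_sub_div_two (hsphere x hxI) (hsphere z hzI)
    _ ≤ 2 * arcsin ((z - x) / 2) := by gcongr
    _ < r * (z - x) := hzr

theorem angle_eq_abs_sub_of_lipschitzOnWith {γ : ℝ → V} {a b : ℝ}
    (hsphere : ∀ t ∈ Icc a b, ‖γ t‖ = 1) (hγ : LipschitzOnWith 1 γ (Icc a b))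
    (hends : angle (γ a) (γ b) = b - a) {s t : ℝ} (hs : s ∈ Icc a b) (ht : t ∈ Icc a b) :
    angle (γ s) (γ t) = |t - s| := by
  wlog hst : s ≤ t generalizing s t
  · rw [angle_comm, abs_sub_comm]
    exact this ht hs (le_of_not_ge hst)
  have hangle : ∀ {u v : ℝ}, a ≤ u → u ≤ v → v ≤ b → angle (γ u) (γ v) ≤ v - u :=
    fun hu huv hv => angle_le_sub_of_lipschitzOnWith huv
      (fun r hr => hsphere r ⟨hu.trans hr.1, hr.2.trans hv⟩) (hγ.mono (Icc_subset_Icc hu hv))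
  have hle := hangle hs.1 hst ht.2
  have hge : b - a ≤ (s - a) + angle (γ s) (γ t) + (b - t) := by
    calc b - a = angle (γ a) (γ b) := hends.symm
      _ ≤ angle (γ a) (γ s) + angle (γ s) (γ t) + angle (γ t) (γ b) := by
        linarith [angle_le_angle_add_angle (γ a) (γ s) (γ b),
          angle_le_angle_add_angle (γ s) (γ t) (γ b)]
      _ ≤ (s - a) + angle (γ s) (γ t) + (b - t) := by
        gcongr
        · exact hangle le_rfl hs.1 (hst.trans ht.2)
        · exact hangle (hs.1.trans hst) ht.2 le_rfl
  rw [abs_of_nonneg (sub_nonneg.mpr hst)]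
  linarith

theorem eq_cos_smul_add_sin_smul_of_inner_eq {x u v : V} {θ : ℝ} (hx : ‖x‖ = 1)
    (hu : ‖u‖ = 1) (hv : ‖v‖ = 1) (huv : ⟪u, v⟫ = 0) (hxu : ⟪u, x⟫ = cos θ)
    (hxv : ⟪v, x⟫ = sin θ) : x = cos θ • u + sin θ • v := by
  rw [← sub_eq_zero, ← inner_self_eq_zero (𝕜 := ℝ)]
  simp only [inner_sub_left, inner_sub_right, inner_add_left, inner_add_right,
    real_inner_smul_left, real_inner_smul_right, inner_self_eq_one_of_norm_eq_one hx,
    inner_self_eq_one_of_norm_eq_one hu, inner_self_eq_one_of_norm_eq_one hv,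
    real_inner_comm u v, real_inner_comm u x, real_inner_comm v x, huv, hxu, hxv]
  linear_combination -sin_sq_add_cos_sq θ

end

/-- A C¹ unit-speed curve of length `π` on the unit sphere joining a pair of antipodal
points is an arc of a great circle: `γ t = cos t • γ 0 + sin t • γ'(0)`. -/
theorem antipodal_unit_speed_curve_is_great_circle {n : ℕ}
    (γ : ℝ → EuclideanSpace ℝ (Fin (n + 1)))
    (hγ : ContDiffOn ℝ 1 γ (Icc 0 π))
    (hsphere : ∀ t ∈ Icc 0 π, ‖γ t‖ = 1)
    (hspeed : ∀ t ∈ Icc 0 π, ‖derivWithin γ (Icc 0 π) t‖ = 1)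
    (hanti : γ π = -γ 0) :
    ∀ t ∈ Icc 0 π,
      γ t = Real.cos t • γ 0 + Real.sin t • derivWithin γ (Icc 0 π) 0 := by
  have h0 : (0 : ℝ) ∈ Icc 0 π := ⟨le_rfl, pi_pos.le⟩
  have hmid : π / 2 ∈ Icc 0 π := ⟨by positivity, by linarith [pi_pos]⟩
  have hlip : LipschitzOnWith 1 γ (Icc 0 π) :=
    (convex_Icc 0 π).lipschitzOnWith_of_nnnorm_derivWithin_le (hγ.differentiableOn one_ne_zero)
      fun t ht => by rw [← NNReal.coe_le_coe, coe_nnnorm, hspeed t ht, NNReal.coe_one]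
  have hends : angle (γ 0) (γ π) = π - 0 := by
    rw [hanti, angle_self_neg_of_nonzero (norm_ne_zero_iff.mp (by simp [hsphere 0 h0])), sub_zero]
  have hinner : ∀ s ∈ Icc 0 π, ∀ t ∈ Icc 0 π, ⟪γ s, γ t⟫ = cos (t - s) := fun s hs t ht => by
    rw [inner_eq_cos_angle_of_norm_eq_one (hsphere s hs) (hsphere t ht),
      angle_eq_abs_sub_of_lipschitzOnWith hsphere hlip hends hs ht, cos_abs]
  have hcircle : ∀ t ∈ Icc 0 π, γ t = cos t • γ 0 + sin t • γ (π / 2) := fun t ht =>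
    eq_cos_smul_add_sin_smul_of_inner_eq (hsphere t ht) (hsphere 0 h0) (hsphere _ hmid)
      (by rw [hinner 0 h0 _ hmid, sub_zero, cos_pi_div_two]) (by rw [hinner 0 h0 t ht, sub_zero])
      (by rw [hinner _ hmid t ht, cos_sub_pi_div_two])
  have hderiv : derivWithin γ (Icc 0 π) 0 = γ (π / 2) := by
    have hdiff : HasDerivAt (fun t => cos t • γ 0 + sin t • γ (π / 2))
        (-sin 0 • γ 0 + cos 0 • γ (π / 2)) 0 :=
      ((hasDerivAt_cos 0).smul_const _).add ((hasDerivAt_sin 0).smul_const _)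
    rw [derivWithin_congr hcircle (hcircle 0 h0),
      hdiff.hasDerivWithinAt.derivWithin (uniqueDiffOn_Icc pi_pos 0 h0)]
    simp
  intro t ht
  rw [hderiv]
  exact hcircle t ht
end

section
/- There is no C² unit-speed curve γ : ℝ → ℝⁿ contained in the closed unit ball (‖γ(t)‖ ≤ 1 for all t) whose curvature satisfies ‖γ''(t)‖ ≤ c for all t for some constant c < 1. Equivalently, every C² unit-speed curve γ : ℝ → ℝⁿ contained in the closed unit ball satisfies sup over t of ‖γ''(t)‖ ≥ 1. -/
/-!
If the curvature were bounded by `c < 1`, then `f t = ‖γ t‖²` would satisfy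
`f'' = 2 (‖γ'‖² + ⟪γ, γ''⟫) ≥ 2 (1 - c) > 0`, so `f` would grow at least linearly once `f'`
exceeds `1`; but `f ≤ 1` because `γ` stays in the unit ball.
-/

open Real Set

theorem not_bddAbove_range_of_pos_le_deriv_deriv {f f' : ℝ → ℝ} {a : ℝ} (ha : 0 < a)
    (hf : ∀ x, HasDerivAt f (f' x) x) (hf' : Differentiable ℝ f')
    (hf'' : ∀ x, a ≤ deriv f' x) : ¬BddAbove (range f) := by
  rintro ⟨M, hM⟩
  set T := max 0 ((1 - f' 0) / a)
  have one_le_deriv : ∀ x ∈ interior (Ici T), 1 ≤ deriv f x := by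
    intro x hx
    rw [interior_Ici, mem_Ioi] at hx
    have hx0 : 0 ≤ x := (le_max_left _ _).trans hx.le
    have hxa : 1 - f' 0 ≤ a * x := by
      rw [← div_le_iff₀' ha]
      exact (le_max_right _ _).trans hx.le
    have := mul_sub_le_image_sub_of_le_deriv hf' hf'' hx0
    rw [(hf x).deriv]
    linarith
  set y := T + |M - f T| + 1
  have hTy : T ≤ y := by linarith [abs_nonneg (M - f T)]
  have growth : 1 * (y - T) ≤ f y - f T :=
    (convex_Ici T).mul_sub_le_image_sub_of_le_deriv
      (fun x _ => (hf x).continuousAt.continuousWithinAt)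
      (fun x _ => (hf x).differentiableAt.differentiableWithinAt)
      one_le_deriv T self_mem_Ici y hTy hTy
  have hfy : f y ≤ M := hM (mem_range_self y)
  linarith [le_abs_self (M - f T)]

theorem hasDerivAt_two_mul_inner_deriv {E : Type*} [NormedAddCommGroup E]
    [InnerProductSpace ℝ E] {γ : ℝ → E} {t : ℝ} (hγ : DifferentiableAt ℝ γ t)
    (hγ' : DifferentiableAt ℝ (deriv γ) t) :
    HasDerivAt (fun s => 2 * inner ℝ (γ s) (deriv γ s))
      (2 * (inner ℝ (γ t) (deriv (deriv γ) t) + ‖deriv γ t‖ ^ 2)) t := by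
  have := (hγ.hasDerivAt.inner ℝ hγ'.hasDerivAt).const_mul 2
  rwa [real_inner_self_eq_norm_sq] at this

/-- No C² unit-speed curve `γ : ℝ → ℝⁿ` contained in the closed unit ball has its
curvature bounded by a constant `c < 1`: for every `c < 1` there is a parameter `t`
with `‖γ''(t)‖ > c`.  Equivalently, the supremum of the curvature of such a curve
is at least `1`. -/
theorem curvature_of_curve_in_unit_ball {n : ℕ}
    (γ : ℝ → EuclideanSpace ℝ (Fin n))
    (hγ : ContDiff ℝ 2 γ)
    (hspeed : ∀ t : ℝ, ‖deriv γ t‖ = 1)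
    (hball : ∀ t : ℝ, ‖γ t‖ ≤ 1) :
    ∀ c : ℝ, c < 1 → ∃ t : ℝ, c < ‖deriv (deriv γ) t‖ := by
  intro c hc
  by_contra! hcurv
  have hγ₁ := hγ.differentiable two_ne_zero
  have hγ₂ := hγ.differentiable_deriv_two
  have second_deriv t := hasDerivAt_two_mul_inner_deriv (hγ₁ t) (hγ₂ t)
  refine not_bddAbove_range_of_pos_le_deriv_deriv (f := (‖γ ·‖ ^ 2)) (a := 2 * (1 - c))
    (by linarith) (fun t => (hγ₁ t).hasDerivAt.norm_sq)
    (fun t => (second_deriv t).differentiableAt) (fun t => ?_) ⟨1, ?_⟩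
  · have inner_ge : -c ≤ inner ℝ (γ t) (deriv (deriv γ) t) := by
      have hle : ‖γ t‖ * ‖deriv (deriv γ) t‖ ≤ c := by
        nlinarith [hball t, hcurv t, norm_nonneg (γ t), norm_nonneg (deriv (deriv γ) t)]
      linarith [neg_abs_le (inner ℝ (γ t) (deriv (deriv γ) t)),
        abs_real_inner_le_norm (γ t) (deriv (deriv γ) t)]
    rw [(second_deriv t).deriv, hspeed t]
    linarith
  · rintro _ ⟨t, rfl⟩
    exact pow_le_one₀ (norm_nonneg _) (hball t)
end

section
/- Let γ : ℝ → ℝⁿ be a C² unit-speed curve contained in the closed unit ball (‖γ(t)‖ ≤ 1 for all t) with ‖γ''(t)‖ ≤ 1 for all t. Then ‖γ(t)‖ = 1 for all t and γ''(t) = −γ(t) for all t; that is, γ parametrizes a great circle of the unit sphere. -/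
/-!
For a unit-speed curve `γ`, the function `‖γ‖²` has second derivative `2 (1 + ⟪γ, γ''⟫)`, which
is nonnegative when `‖γ‖ ≤ 1` and `‖γ''‖ ≤ 1`. A convex function on `ℝ` that is bounded above is
constant, so `⟪γ, γ'⟫ ≡ 0` and hence `⟪γ, γ''⟫ ≡ -1`. Equality in Cauchy–Schwarz between two
vectors of norm at most one then forces `‖γ‖ = 1` and `γ'' = -γ`.
-/

open Set

namespace ConvexOn

variable {f : ℝ → ℝ} {f' x : ℝ}

theorem add_mul_sub_le_of_hasDerivAt (hf : ConvexOn ℝ univ f) (hx : HasDerivAt f f' x)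
    (y : ℝ) : f x + f' * (y - x) ≤ f y := by
  rcases lt_trichotomy x y with hxy | rfl | hyx
  · have := hf.le_slope_of_hasDerivAt (mem_univ x) (mem_univ y) hxy hx
    rw [slope_def_field, le_div_iff₀ (sub_pos.2 hxy)] at this
    linarith
  · simp
  · have := hf.slope_le_of_hasDerivAt (mem_univ y) (mem_univ x) hyx hx
    rw [slope_def_field, div_le_iff₀ (sub_pos.2 hyx)] at this
    linarith

theorem hasDerivAt_eq_zero_of_bddAbove (hf : ConvexOn ℝ univ f) (hb : BddAbove (range f))
    (hx : HasDerivAt f f' x) : f' = 0 := by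
  obtain ⟨M, hM⟩ := hb
  by_contra hf'
  -- the tangent line at `x` exceeds `M` at this point
  have hy := hf.add_mul_sub_le_of_hasDerivAt hx (x + (M - f x + 1) / f')
  have hfy := hM (mem_range_self (x + (M - f x + 1) / f'))
  rw [add_sub_cancel_left, mul_div_cancel₀ _ hf'] at hy
  linarith

end ConvexOn

theorem norm_eq_one_and_eq_neg_of_inner_eq_neg_one {E : Type*} [NormedAddCommGroup E]
    [InnerProductSpace ℝ E] {x y : E} (hx : ‖x‖ ≤ 1) (hy : ‖y‖ ≤ 1) (hxy : inner ℝ x y = -1) :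
    ‖x‖ = 1 ∧ y = -x := by
  have hsum : ‖x + y‖ ^ 2 ≤ 0 := by
    rw [norm_add_sq_real, hxy]
    nlinarith [norm_nonneg x, norm_nonneg y]
  have hyx : y = -x :=
    eq_neg_of_add_eq_zero_right (norm_le_zero_iff.1 (by nlinarith [norm_nonneg (x + y)]))
  refine ⟨?_, hyx⟩
  rw [hyx, inner_neg_right, real_inner_self_eq_norm_sq, neg_inj] at hxy
  nlinarith [norm_nonneg x]

theorem inner_eq_neg_one_of_unit_speed_of_norm_le_one {E : Type*} [NormedAddCommGroup E]
    [InnerProductSpace ℝ E] {γ γ' γ'' : ℝ → E} (hγ : ∀ t, HasDerivAt γ (γ' t) t)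
    (hγ' : ∀ t, HasDerivAt γ' (γ'' t) t) (hspeed : ∀ t, ‖γ' t‖ = 1) (hball : ∀ t, ‖γ t‖ ≤ 1)
    (hcurv : ∀ t, ‖γ'' t‖ ≤ 1) (t : ℝ) : inner ℝ (γ t) (γ'' t) = -1 := by
  set d : ℝ → ℝ := fun s ↦ 2 * inner ℝ (γ s) (γ' s)
  have hd : ∀ s, HasDerivAt d (2 * (inner ℝ (γ s) (γ'' s) + 1)) s := fun s ↦ by
    simpa [real_inner_self_eq_norm_sq, hspeed s] using ((hγ s).inner ℝ (hγ' s)).const_mul 2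
  have hd_mono : Monotone d := monotone_of_hasDerivAt_nonneg hd fun s ↦ by
    have hcs : |inner ℝ (γ s) (γ'' s)| ≤ 1 := (abs_real_inner_le_norm _ _).trans
      (mul_le_one₀ (hball s) (norm_nonneg _) (hcurv s))
    show (0 : ℝ) ≤ 2 * (_ + 1)
    linarith [neg_le_of_abs_le hcs]
  have hconvex : ConvexOn ℝ univ (‖γ ·‖ ^ 2) := by
    refine Monotone.convexOn_univ_of_deriv (fun s ↦ (hγ s).norm_sq.differentiableAt) ?_
    convert hd_mono using 1
    exact funext fun s ↦ (hγ s).norm_sq.deriv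
  have hbdd : BddAbove (range (‖γ ·‖ ^ 2)) := ⟨1, by
    rintro _ ⟨s, rfl⟩
    exact pow_le_one₀ (norm_nonneg _) (hball s)⟩
  have hd_zero : d = fun _ ↦ 0 :=
    funext fun s ↦ hconvex.hasDerivAt_eq_zero_of_bddAbove hbdd (hγ s).norm_sq
  have := (hd t).unique (hd_zero ▸ hasDerivAt_const t 0)
  linarith

/-- **Rigidity:** a C² unit-speed curve `γ : ℝ → ℝⁿ` contained in the closed unit ball
with curvature `‖γ''‖ ≤ 1` everywhere must lie on the unit sphere and satisfy
`γ'' = -γ`; that is, it parametrizes a great circle of the unit sphere. -/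
theorem curve_in_unit_ball_with_curvature_one_is_great_circle {n : ℕ}
    (γ : ℝ → EuclideanSpace ℝ (Fin n))
    (hγ : ContDiff ℝ 2 γ)
    (hspeed : ∀ t : ℝ, ‖deriv γ t‖ = 1)
    (hball : ∀ t : ℝ, ‖γ t‖ ≤ 1)
    (hcurv : ∀ t : ℝ, ‖deriv (deriv γ) t‖ ≤ 1) :
    (∀ t : ℝ, ‖γ t‖ = 1) ∧ (∀ t : ℝ, deriv (deriv γ) t = -γ t) := by
  have hγ₁ : Differentiable ℝ γ := hγ.differentiable (by norm_num)
  have hγ₂ : Differentiable ℝ (deriv γ) := hγ.differentiable_deriv_two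
  exact forall_and.1 fun t ↦ norm_eq_one_and_eq_neg_of_inner_eq_neg_one (hball t) (hcurv t)
    (inner_eq_neg_one_of_unit_speed_of_norm_le_one (fun s ↦ (hγ₁ s).hasDerivAt)
      (fun s ↦ (hγ₂ s).hasDerivAt) hspeed hball hcurv t)
end

section
/- Let u, v ∈ ℝ^{l+1} be orthonormal vectors (‖u‖ = ‖v‖ = 1, ⟨u, v⟩ = 0) and for t ∈ ℝ let w(t) = cos(t)·u + sin(t)·v. Then the curve γ(t) = w(t)·w(t)ᵀ in the space of (l+1)×(l+1) real matrices satisfies γ(t) = M₀ + cos(2t)·A + sin(2t)·B for all t, where M₀ = (u·uᵀ + v·vᵀ)/2, A = (u·uᵀ − v·vᵀ)/2, B = (u·vᵀ + v·uᵀ)/2. Moreover, with respect to the Frobenius inner product ⟨M, N⟩ = tr(M·Nᵀ), one has ⟨A, B⟩ = 0 and ‖A‖ = ‖B‖ = 1/√2. Hence γ is a planar circle of radius 1/√2: its image lies in the 2-dimensional affine plane M₀ + span{A, B} and ‖γ(t) − M₀‖ = 1/√2 for all t. -/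
open Real Matrix

lemma frob_vecMulVec {n : ℕ} (a b c d : Fin n → ℝ) :
    Matrix.trace (vecMulVec a b * (vecMulVec c d)ᵀ) =
      (∑ i, a i * c i) * (∑ j, b j * d j) := by
  simp only [Matrix.trace, Matrix.diag_apply, Matrix.mul_apply, Matrix.transpose_apply,
    vecMulVec_apply]
  rw [Finset.sum_mul_sum]
  apply Finset.sum_congr rfl
  intro i _
  apply Finset.sum_congr rfl
  intro j _
  ring

/-- **Geodesics of the real Veronese embedding are planar circles.**
For orthonormal `u, v ∈ ℝ^{l+1}`, the image `γ(t) = w(t)·w(t)ᵀ` of the great circle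
`w(t) = cos t • u + sin t • v` under the Veronese map satisfies
`γ t = M₀ + cos (2t) • A + sin (2t) • B`, where `⟨A, B⟩ = 0` and
`‖A‖ = ‖B‖ = 1/√2` in the Frobenius inner product `⟨M, N⟩ = tr (M Nᵀ)`.
Hence `γ` is a planar circle of radius `1/√2`: it lies in the affine plane
`M₀ + span {A, B}` and `‖γ t - M₀‖ = 1/√2` for all `t`. -/
theorem real_veronese_geodesics_are_planar_circles (l : ℕ)
    (u v : Fin (l + 1) → ℝ)
    (hu : ∑ i, u i ^ 2 = 1) (hv : ∑ i, v i ^ 2 = 1)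
    (huv : ∑ i, u i * v i = 0) :
    let w : ℝ → Fin (l + 1) → ℝ := fun t => Real.cos t • u + Real.sin t • v
    let γ : ℝ → Matrix (Fin (l + 1)) (Fin (l + 1)) ℝ :=
      fun t => vecMulVec (w t) (w t)
    let M₀ := (1 / 2 : ℝ) • (vecMulVec u u + vecMulVec v v)
    let A := (1 / 2 : ℝ) • (vecMulVec u u - vecMulVec v v)
    let B := (1 / 2 : ℝ) • (vecMulVec u v + vecMulVec v u)
    (∀ t : ℝ, γ t = M₀ + Real.cos (2 * t) • A + Real.sin (2 * t) • B) ∧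
    Matrix.trace (A * Bᵀ) = 0 ∧
    Real.sqrt (Matrix.trace (A * Aᵀ)) = 1 / Real.sqrt 2 ∧
    Real.sqrt (Matrix.trace (B * Bᵀ)) = 1 / Real.sqrt 2 ∧
    (∀ t : ℝ, γ t - M₀ ∈ Submodule.span ℝ {A, B}) ∧
    (∀ t : ℝ, Real.sqrt (Matrix.trace ((γ t - M₀) * (γ t - M₀)ᵀ)) = 1 / Real.sqrt 2) := by
  intro w γ M₀ A B
  have huu : ∑ i, u i * u i = 1 := by simpa [pow_two] using hu
  have hvv : ∑ i, v i * v i = 1 := by simpa [pow_two] using hv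
  have hvu : ∑ i, v i * u i = 0 := by
    rw [← huv]; exact Finset.sum_congr rfl fun i _ => mul_comm _ _
  have key : ∀ t : ℝ, γ t = M₀ + Real.cos (2 * t) • A + Real.sin (2 * t) • B := by
    intro t
    ext i j
    simp only [γ, w, M₀, A, B, vecMulVec_apply, Matrix.add_apply, Matrix.sub_apply,
      Matrix.smul_apply, Pi.add_apply, Pi.smul_apply, smul_eq_mul,
      Real.cos_two_mul', Real.sin_two_mul]
    linear_combination ((u i * u j + v i * v j) / 2) * (Real.sin_sq_add_cos_sq t)
  -- inner products
  have hABfrob : Matrix.trace (A * Bᵀ) = 0 := by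
    have : A * Bᵀ = (1/2 : ℝ) • ((1/2 : ℝ) •
        ((vecMulVec u u - vecMulVec v v) * (vecMulVec u v + vecMulVec v u)ᵀ)) := by
      simp [A, B, Matrix.mul_add, Matrix.add_mul, Matrix.sub_mul, Matrix.mul_sub, mul_smul_comm, smul_mul_assoc, smul_add, smul_sub, smul_smul]
    rw [this]
    simp only [Matrix.trace_smul, smul_eq_mul, Matrix.transpose_add, Matrix.sub_mul,
      Matrix.mul_add, Matrix.trace_sub, Matrix.trace_add, frob_vecMulVec,
      huu, hvv, huv, hvu]
    ring
  have hAAfrob : Matrix.trace (A * Aᵀ) = 1/2 := by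
    have : A * Aᵀ = (1/2 : ℝ) • ((1/2 : ℝ) •
        ((vecMulVec u u - vecMulVec v v) * (vecMulVec u u - vecMulVec v v)ᵀ)) := by
      simp [A, Matrix.mul_add, Matrix.add_mul, Matrix.sub_mul, Matrix.mul_sub, mul_smul_comm, smul_mul_assoc, smul_add, smul_sub, smul_smul]
    rw [this]
    simp only [Matrix.trace_smul, smul_eq_mul, Matrix.transpose_sub, Matrix.sub_mul,
      Matrix.mul_sub, Matrix.trace_sub, frob_vecMulVec, huu, hvv, huv, hvu]
    ring
  have hBBfrob : Matrix.trace (B * Bᵀ) = 1/2 := by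
    have : B * Bᵀ = (1/2 : ℝ) • ((1/2 : ℝ) •
        ((vecMulVec u v + vecMulVec v u) * (vecMulVec u v + vecMulVec v u)ᵀ)) := by
      simp [B, Matrix.mul_add, Matrix.add_mul, Matrix.sub_mul, Matrix.mul_sub, mul_smul_comm, smul_mul_assoc, smul_add, smul_sub, smul_smul]
    rw [this]
    simp only [Matrix.trace_smul, smul_eq_mul, Matrix.transpose_add, Matrix.add_mul,
      Matrix.mul_add, Matrix.trace_add, frob_vecMulVec, huu, hvv, huv, hvu]
    ring
  have hBAfrob : Matrix.trace (B * Aᵀ) = 0 := by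
    have : B * Aᵀ = (1/2 : ℝ) • ((1/2 : ℝ) •
        ((vecMulVec u v + vecMulVec v u) * (vecMulVec u u - vecMulVec v v)ᵀ)) := by
      simp [A, B, Matrix.mul_add, Matrix.add_mul, Matrix.sub_mul, Matrix.mul_sub, mul_smul_comm, smul_mul_assoc, smul_add, smul_sub, smul_smul]
    rw [this]
    simp only [Matrix.trace_smul, smul_eq_mul, Matrix.transpose_sub, Matrix.add_mul,
      Matrix.mul_sub, Matrix.trace_sub, Matrix.trace_add, frob_vecMulVec,
      huu, hvv, huv, hvu]
    ring
  have hsqrt : Real.sqrt (1/2 : ℝ) = 1 / Real.sqrt 2 := by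
    rw [one_div, one_div, Real.sqrt_inv]
  have hdiff : ∀ t : ℝ, γ t - M₀ = Real.cos (2 * t) • A + Real.sin (2 * t) • B := by
    intro t; rw [key t]; abel
  refine ⟨key, hABfrob, by rw [hAAfrob]; exact hsqrt, by rw [hBBfrob]; exact hsqrt, ?_, ?_⟩
  · intro t
    rw [hdiff t]
    exact Submodule.add_mem _
      (Submodule.smul_mem _ _ (Submodule.subset_span (Set.mem_insert _ _)))
      (Submodule.smul_mem _ _ (Submodule.subset_span (Set.mem_insert_of_mem _ rfl)))
  · intro t
    rw [hdiff t]
    have expand : Matrix.trace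
        ((Real.cos (2*t) • A + Real.sin (2*t) • B) *
          (Real.cos (2*t) • A + Real.sin (2*t) • B)ᵀ) =
        Real.cos (2*t) * Real.cos (2*t) * Matrix.trace (A * Aᵀ)
        + Real.cos (2*t) * Real.sin (2*t) * Matrix.trace (A * Bᵀ)
        + Real.sin (2*t) * Real.cos (2*t) * Matrix.trace (B * Aᵀ)
        + Real.sin (2*t) * Real.sin (2*t) * Matrix.trace (B * Bᵀ) := by
      simp only [Matrix.transpose_add, Matrix.transpose_smul, Matrix.add_mul,
        Matrix.mul_add, Matrix.smul_mul, Matrix.mul_smul, Matrix.trace_add,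
        Matrix.trace_smul, smul_eq_mul]
      ring
    rw [expand, hAAfrob, hBBfrob, hABfrob, hBAfrob]
    have : Real.cos (2*t) * Real.cos (2*t) * (1/2) + Real.cos (2*t) * Real.sin (2*t) * 0
        + Real.sin (2*t) * Real.cos (2*t) * 0 + Real.sin (2*t) * Real.sin (2*t) * (1/2)
        = 1/2 := by
      have h := Real.sin_sq_add_cos_sq (2*t)
      nlinarith [h]
    rw [this]; exact hsqrt
end

section
/- Let u, v ∈ ℂ^{l+1} be unit vectors with ⟨u, v⟩ = 0 (Hermitian inner product), and for t ∈ ℝ let w(t) = cos(t)·u + sin(t)·v. Then the curve γ(t) = w(t)·w(t)* in the space of (l+1)×(l+1) complex matrices (where w·w* denotes the matrix with entries wᵢ·conj(wⱼ)) satisfies γ(t) = M₀ + cos(2t)·A + sin(2t)·B for all t, where M₀ = (u·u* + v·v*)/2, A = (u·u* − v·v*)/2, B = (u·v* + v·u*)/2. Moreover, with respect to the real inner product ⟨M, N⟩ = Re tr(M·N*), one has ⟨A, B⟩ = 0 and ‖A‖ = ‖B‖ = 1/√2; hence γ is a planar circle of radius 1/√2. -/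
open Real Matrix

theorem trace_vvh {n : ℕ} (a b c d : Fin n → ℂ) :
    Matrix.trace (vecMulVec a b * (vecMulVec c d)ᴴ) =
      (∑ j, b j * starRingEnd ℂ (d j)) * (∑ i, a i * starRingEnd ℂ (c i)) := by
  simp only [Matrix.trace, Matrix.diag, Matrix.mul_apply, vecMulVec_apply,
    conjTranspose_apply, Finset.sum_mul_sum]
  rw [Finset.sum_comm]
  refine Finset.sum_congr rfl fun j _ => Finset.sum_congr rfl fun i _ => ?_
  simp only [star_mul', Complex.star_def]
  ring

/-- **Geodesics of the complex Veronese embedding are planar circles.**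
For unit vectors `u, v ∈ ℂ^{l+1}` with `⟨u, v⟩ = 0`, the curve
`γ(t) = w(t)·w(t)*` (entries `wᵢ · conj wⱼ`), where `w(t) = cos t • u + sin t • v`,
satisfies `γ t = M₀ + cos (2t) • A + sin (2t) • B`, where, with respect to the
real inner product `⟨M, N⟩ = Re tr (M N*)`, one has `⟨A, B⟩ = 0` and
`‖A‖ = ‖B‖ = 1/√2`; hence `γ` is a planar circle of radius `1/√2`. -/
theorem complex_veronese_geodesics_are_planar_circles (l : ℕ)
    (u v : Fin (l + 1) → ℂ)
    (hu : ∑ i, Complex.normSq (u i) = 1) (hv : ∑ i, Complex.normSq (v i) = 1)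
    (huv : ∑ i, starRingEnd ℂ (u i) * v i = 0) :
    let w : ℝ → Fin (l + 1) → ℂ := fun t => Real.cos t • u + Real.sin t • v
    let proj : (Fin (l + 1) → ℂ) → Matrix (Fin (l + 1)) (Fin (l + 1)) ℂ :=
      fun x => vecMulVec x (fun j => starRingEnd ℂ (x j))
    let γ : ℝ → Matrix (Fin (l + 1)) (Fin (l + 1)) ℂ := fun t => proj (w t)
    let M₀ := (1 / 2 : ℝ) • (proj u + proj v)
    let A := (1 / 2 : ℝ) • (proj u - proj v)
    let B := (1 / 2 : ℝ) •
      (vecMulVec u (fun j => starRingEnd ℂ (v j)) +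
       vecMulVec v (fun j => starRingEnd ℂ (u j)))
    (∀ t : ℝ, γ t = M₀ + Real.cos (2 * t) • A + Real.sin (2 * t) • B) ∧
    (Matrix.trace (A * Bᴴ)).re = 0 ∧
    Real.sqrt (Matrix.trace (A * Aᴴ)).re = 1 / Real.sqrt 2 ∧
    Real.sqrt (Matrix.trace (B * Bᴴ)).re = 1 / Real.sqrt 2 ∧
    (∀ t : ℝ, Real.sqrt (Matrix.trace ((γ t - M₀) * (γ t - M₀)ᴴ)).re
      = 1 / Real.sqrt 2) := by
  intro w proj γ M₀ A B
  -- basic scalar identities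
  have e1 : (∑ j, u j * starRingEnd ℂ (u j)) = 1 := by
    simp only [Complex.mul_conj]
    rw [← Complex.ofReal_sum]
    simp [hu]
  have e2 : (∑ j, v j * starRingEnd ℂ (v j)) = 1 := by
    simp only [Complex.mul_conj]
    rw [← Complex.ofReal_sum]
    simp [hv]
  have e3 : (∑ j, starRingEnd ℂ (u j) * v j) = 0 := huv
  have e4 : (∑ j, u j * starRingEnd ℂ (v j)) = 0 := by
    have := congrArg (starRingEnd ℂ) huv
    simpa [map_sum, mul_comm] using this
  have e5 : (∑ j, starRingEnd ℂ (v j) * u j) = 0 := by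
    simpa [mul_comm] using e4
  have e6 : (∑ j, v j * starRingEnd ℂ (u j)) = 0 := by
    simpa [mul_comm] using e3
  have e1' : (∑ j, starRingEnd ℂ (u j) * u j) = 1 := by simpa [mul_comm] using e1
  have e2' : (∑ j, starRingEnd ℂ (v j) * v j) = 1 := by simpa [mul_comm] using e2
  -- trace computations
  have tAB : Matrix.trace (A * Bᴴ) = 0 := by
    simp only [A, B, proj, conjTranspose_smul, conjTranspose_add, conjTranspose_sub,
      Matrix.smul_mul, Matrix.mul_smul, Matrix.sub_mul, Matrix.mul_add,
      trace_smul, trace_add, trace_sub, trace_vvh, Complex.conj_conj]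
    rw [e3, e4, e5, e6]
    simp
  have tBA : Matrix.trace (B * Aᴴ) = 0 := by
    simp only [A, B, proj, conjTranspose_smul, conjTranspose_add, conjTranspose_sub,
      Matrix.smul_mul, Matrix.mul_smul, Matrix.add_mul, Matrix.mul_sub,
      trace_smul, trace_add, trace_sub, trace_vvh, Complex.conj_conj]
    rw [e3, e4, e5, e6]
    simp
  have tAA : Matrix.trace (A * Aᴴ) = 1 / 2 := by
    simp only [A, proj, conjTranspose_smul, conjTranspose_sub,
      Matrix.smul_mul, Matrix.mul_smul, Matrix.sub_mul, Matrix.mul_sub,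
      trace_smul, trace_sub, trace_vvh, Complex.conj_conj]
    rw [e1, e2, e1', e2', e3, e5]
    norm_num
  have tBB : Matrix.trace (B * Bᴴ) = 1 / 2 := by
    simp only [B, conjTranspose_smul, conjTranspose_add,
      Matrix.smul_mul, Matrix.mul_smul, Matrix.add_mul, Matrix.mul_add,
      trace_smul, trace_add, trace_vvh, Complex.conj_conj]
    rw [e1, e2, e1', e2', e4, e6]
    norm_num
  -- the parametrization identity
  have hpar : ∀ t : ℝ, γ t = M₀ + Real.cos (2 * t) • A + Real.sin (2 * t) • B := by
    intro t
    ext i j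
    have hs : ((Real.sin t : ℂ))^2 = 1 - ((Real.cos t : ℂ))^2 := by
      rw [← Complex.ofReal_pow, ← Complex.ofReal_pow, Real.sin_sq]
      push_cast
      ring
    simp only [γ, w, proj, M₀, A, B, vecMulVec_apply, Matrix.add_apply, Matrix.sub_apply,
      Matrix.smul_apply, Pi.add_apply, Pi.smul_apply, smul_eq_mul, Complex.real_smul,
      _root_.map_add, _root_.map_mul, Complex.conj_ofReal, Real.cos_two_mul,
      Real.sin_two_mul, Complex.ofReal_sub, Complex.ofReal_mul, Complex.ofReal_one,
      Complex.ofReal_ofNat, Complex.ofReal_pow, Complex.ofReal_div]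
    linear_combination (v i * starRingEnd ℂ (v j)) * hs
  refine ⟨hpar, by rw [tAB]; simp, ?_, ?_, ?_⟩
  · rw [tAA]
    norm_num [Real.sqrt_inv]
  · rw [tBB]
    norm_num [Real.sqrt_inv]
  · intro t
    have hdiff : γ t - M₀ = Real.cos (2 * t) • A + Real.sin (2 * t) • B := by
      rw [hpar t]; abel
    rw [hdiff]
    have : Matrix.trace ((Real.cos (2 * t) • A + Real.sin (2 * t) • B) *
        (Real.cos (2 * t) • A + Real.sin (2 * t) • B)ᴴ)
        = ((Real.cos (2 * t))^2 / 2 + (Real.sin (2 * t))^2 / 2 : ℝ) := by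
      simp only [conjTranspose_add, conjTranspose_smul, Matrix.add_mul, Matrix.mul_add,
        Matrix.smul_mul, Matrix.mul_smul, trace_add, trace_smul, tAA, tBB, tAB, tBA,
        star_trivial, smul_eq_mul, Complex.real_smul]
      push_cast
      ring
    rw [this, Complex.ofReal_re]
    have h12 : Real.cos (2*t)^2/2 + Real.sin (2*t)^2/2 = 2⁻¹ := by
      have := Real.sin_sq_add_cos_sq (2*t); linarith
    rw [h12]
    norm_num [Real.sqrt_inv]
end

section
/- Define φ : ℝ³ → ℝ⁶ by φ(x,y,z) = (1/√3)·(cos(√3·x), sin(√3·x), cos(√3·y), sin(√3·y), cos(√3·z), sin(√3·z)). Let w = (a,b,c) ∈ ℝ³ be a unit vector with a + b + c = 0. Then for every p ∈ ℝ³ and every t ∈ ℝ, the second derivative of the curve s ↦ φ(p + s·w) at s = t has Euclidean norm exactly √(3/2). (More generally, for an arbitrary unit vector w = (a,b,c), this norm equals √(3·(a⁴ + b⁴ + c⁴)).) -/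
/-!
Along the line `s ↦ p + s • w`, the coordinate pair `j` of `φ` runs around a circle of
radius `1/√3` at angular speed `√3 wⱼ`, so its acceleration has length `√3 wⱼ²` and
`‖φ''‖² = 3 (w₀⁴ + w₁⁴ + w₂⁴)`. For a unit vector with `w₀ + w₁ + w₂ = 0` the sum of
fourth powers is `1/2`.
-/

open Real

/-- The map `φ : ℝ³ → ℝ⁶`,
`φ(x,y,z) = (1/√3)(cos(√3 x), sin(√3 x), cos(√3 y), sin(√3 y), cos(√3 z), sin(√3 z))`,
whose image is the Clifford torus in `S⁵ ⊂ ℝ⁶`. -/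
noncomputable def cliffordMap : EuclideanSpace ℝ (Fin 3) → EuclideanSpace ℝ (Fin 6) :=
  fun v => (WithLp.equiv 2 (Fin 6 → ℝ)).symm
    ![(1 / Real.sqrt 3) * Real.cos (Real.sqrt 3 * v 0),
      (1 / Real.sqrt 3) * Real.sin (Real.sqrt 3 * v 0),
      (1 / Real.sqrt 3) * Real.cos (Real.sqrt 3 * v 1),
      (1 / Real.sqrt 3) * Real.sin (Real.sqrt 3 * v 1),
      (1 / Real.sqrt 3) * Real.cos (Real.sqrt 3 * v 2),
      (1 / Real.sqrt 3) * Real.sin (Real.sqrt 3 * v 2)]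

theorem hasDerivAt_piLp_iff {𝕜 ι : Type*} [NontriviallyNormedField 𝕜] [Fintype ι]
    {p : ENNReal} [Fact (1 ≤ p)] {E : ι → Type*} [∀ i, NormedAddCommGroup (E i)]
    [∀ i, NormedSpace 𝕜 (E i)] {f : 𝕜 → PiLp p E} {f' : PiLp p E} {x : 𝕜} :
    HasDerivAt f f' x ↔ ∀ i, HasDerivAt (fun y => f y i) (f' i) x := by
  rw [← hasDerivAt_pi, hasDerivAt_iff_hasFDerivAt, hasDerivAt_iff_hasFDerivAt,
    ← (PiLp.continuousLinearEquiv p 𝕜 E).comp_hasFDerivAt_iff]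
  rfl

theorem hasDerivAt_mul_affine (k c d t : ℝ) :
    HasDerivAt (fun s => k * (c + s * d)) (k * d) t := by
  simpa using ((hasDerivAt_mul_const d).const_add c).const_mul k

theorem hasDerivAt_mul_cos_affine (a k c d t : ℝ) :
    HasDerivAt (fun s => a * cos (k * (c + s * d))) (-(a * k * d) * sin (k * (c + t * d))) t :=
  ((hasDerivAt_mul_affine k c d t).cos.const_mul a).congr_deriv (by ring)

theorem hasDerivAt_mul_sin_affine (a k c d t : ℝ) :
    HasDerivAt (fun s => a * sin (k * (c + s * d))) (a * k * d * cos (k * (c + t * d))) t :=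
  ((hasDerivAt_mul_affine k c d t).sin.const_mul a).congr_deriv (by ring)

noncomputable def cliffordVelocity (p w : EuclideanSpace ℝ (Fin 3)) (s : ℝ) :
    EuclideanSpace ℝ (Fin 6) :=
  WithLp.toLp 2
    ![-w 0 * sin (√3 * (p 0 + s * w 0)), w 0 * cos (√3 * (p 0 + s * w 0)),
      -w 1 * sin (√3 * (p 1 + s * w 1)), w 1 * cos (√3 * (p 1 + s * w 1)),
      -w 2 * sin (√3 * (p 2 + s * w 2)), w 2 * cos (√3 * (p 2 + s * w 2))]

noncomputable def cliffordAcceleration (p w : EuclideanSpace ℝ (Fin 3)) (s : ℝ) :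
    EuclideanSpace ℝ (Fin 6) :=
  WithLp.toLp 2
    ![-(√3 * w 0 ^ 2) * cos (√3 * (p 0 + s * w 0)),
      -(√3 * w 0 ^ 2) * sin (√3 * (p 0 + s * w 0)),
      -(√3 * w 1 ^ 2) * cos (√3 * (p 1 + s * w 1)),
      -(√3 * w 1 ^ 2) * sin (√3 * (p 1 + s * w 1)),
      -(√3 * w 2 ^ 2) * cos (√3 * (p 2 + s * w 2)),
      -(√3 * w 2 ^ 2) * sin (√3 * (p 2 + s * w 2))]

theorem hasDerivAt_cliffordMap_line (p w : EuclideanSpace ℝ (Fin 3)) (t : ℝ) :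
    HasDerivAt (fun s => cliffordMap (p + s • w)) (cliffordVelocity p w t) t := by
  rw [hasDerivAt_piLp_iff]
  intro i
  fin_cases i <;>
    first
    | exact (hasDerivAt_mul_cos_affine _ _ _ _ t).congr_deriv (by simp [cliffordVelocity])
    | exact (hasDerivAt_mul_sin_affine _ _ _ _ t).congr_deriv (by simp [cliffordVelocity])

theorem hasDerivAt_cliffordVelocity (p w : EuclideanSpace ℝ (Fin 3)) (t : ℝ) :
    HasDerivAt (cliffordVelocity p w) (cliffordAcceleration p w t) t := by
  rw [hasDerivAt_piLp_iff]
  intro i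
  fin_cases i <;>
    first
    | exact (hasDerivAt_mul_sin_affine _ _ _ _ t).congr_deriv
        (by dsimp [cliffordAcceleration]; ring)
    | exact (hasDerivAt_mul_cos_affine _ _ _ _ t).congr_deriv
        (by dsimp [cliffordAcceleration]; ring)

theorem norm_cliffordAcceleration (p w : EuclideanSpace ℝ (Fin 3)) (t : ℝ) :
    ‖cliffordAcceleration p w t‖ = √(3 * (w 0 ^ 4 + w 1 ^ 4 + w 2 ^ 4)) := by
  rw [← Real.sqrt_sq (norm_nonneg _), EuclideanSpace.real_norm_sq_eq, Fin.sum_univ_six]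
  congr 1
  have h3 : √3 ^ 2 = 3 := Real.sq_sqrt (by norm_num)
  simp only [cliffordAcceleration, PiLp.toLp_apply, Matrix.cons_val, neg_mul, neg_sq, mul_pow, h3]
  linear_combination
    3 * w 0 ^ 4 * sin_sq_add_cos_sq (√3 * (p 0 + t * w 0)) +
    3 * w 1 ^ 4 * sin_sq_add_cos_sq (√3 * (p 1 + t * w 1)) +
    3 * w 2 ^ 4 * sin_sq_add_cos_sq (√3 * (p 2 + t * w 2))

theorem sq_add_sq_add_sq_eq_one_of_norm_eq_one (w : EuclideanSpace ℝ (Fin 3)) (hw : ‖w‖ = 1) :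
    w 0 ^ 2 + w 1 ^ 2 + w 2 ^ 2 = 1 := by
  rw [← Fin.sum_univ_three (f := fun i => w i ^ 2), ← EuclideanSpace.real_norm_sq_eq, hw, one_pow]

/-- With `c = -(a + b)`, both sides are governed by `q = a² + ab + b²`:
`a² + b² + c² = 2q` and `a⁴ + b⁴ + c⁴ = 2q²`. -/
theorem pow_four_add_pow_four_add_pow_four_eq_half {a b c : ℝ} (hsq : a ^ 2 + b ^ 2 + c ^ 2 = 1)
    (hsum : a + b + c = 0) : a ^ 4 + b ^ 4 + c ^ 4 = 1 / 2 := by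
  have hc : c = -(a + b) := by linarith
  subst hc
  linear_combination (a ^ 2 + a * b + b ^ 2 + 1 / 2) * hsq

/-- For a unit vector `w = (a,b,c) ∈ ℝ³`, the second derivative of the curve
`s ↦ φ (p + s • w)` has Euclidean norm `√(3(a⁴ + b⁴ + c⁴))`; in particular,
if `a + b + c = 0`, this norm equals `√(3/2)`: all normal curvatures of the
immersed flat torus are `√(3/2)`. -/
theorem cliffordMap_normal_curvature
    (p w : EuclideanSpace ℝ (Fin 3)) (hw : ‖w‖ = 1) (t : ℝ) :
    ‖deriv (deriv (fun s : ℝ => cliffordMap (p + s • w))) t‖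
      = Real.sqrt (3 * (w 0 ^ 4 + w 1 ^ 4 + w 2 ^ 4)) ∧
    (w 0 + w 1 + w 2 = 0 →
      ‖deriv (deriv (fun s : ℝ => cliffordMap (p + s • w))) t‖
        = Real.sqrt (3 / 2)) := by
  have hvel : deriv (fun s : ℝ => cliffordMap (p + s • w)) = cliffordVelocity p w :=
    funext fun s => (hasDerivAt_cliffordMap_line p w s).deriv
  have hacc : deriv (deriv (fun s : ℝ => cliffordMap (p + s • w))) t =
      cliffordAcceleration p w t := by
    rw [hvel]
    exact (hasDerivAt_cliffordVelocity p w t).deriv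
  rw [hacc, norm_cliffordAcceleration]
  refine ⟨rfl, fun hsum => ?_⟩
  rw [pow_four_add_pow_four_add_pow_four_eq_half
    (sq_add_sq_add_sq_eq_one_of_norm_eq_one w hw) hsum]
  norm_num
end

section
/- Define φ : ℝ³ → ℝ⁶ by φ(x,y,z) = (1/√3)·(cos(√3·x), sin(√3·x), cos(√3·y), sin(√3·y), cos(√3·z), sin(√3·z)) and let X = {(x,y,z) ∈ ℝ³ : x + y + z = 0}. Then √3 is the maximum of ‖φ(p) − φ(q)‖ over p, q ∈ X: for all p, q ∈ X one has ‖φ(p) − φ(q)‖ ≤ √3, and there exist p, q ∈ X with ‖φ(p) − φ(q)‖ = √3. That is, the extrinsic diameter of the immersed flat 2-torus φ(X) ⊂ ℝ⁶ equals √3. -/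
open Real
/-!
Each pair of coordinates of `φ` parametrises a circle of radius `1/√3`, so
`‖φ p - φ q‖² = 2 - (2/3) (cos θ₀ + cos θ₁ + cos θ₂)` with `θᵢ = √3 (pᵢ - qᵢ)`. On the plane `X`
the angles satisfy `θ₀ + θ₁ + θ₂ = 0`, and for such angles `cos θ₀ + cos θ₁ + cos θ₂ ≥ -3/2`,
with equality at `(2π/3, 2π/3, -4π/3)`. Hence `‖φ p - φ q‖² ≤ 3`, with equality attained.
-/

lemma sq_cos_sub_cos_add_sq_sin_sub_sin (a b : ℝ) :
    (cos a - cos b) ^ 2 + (sin a - sin b) ^ 2 = 2 - 2 * cos (a - b) := by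
  rw [cos_sub]
  nlinarith [sin_sq_add_cos_sq a, sin_sq_add_cos_sq b]

/-- From `(1 + cos x + cos y)² + (sin x - sin y)² = 3 + 2 (cos x + cos y + cos (x + y))`. -/
lemma neg_three_halves_le_cos_add_cos_add_cos {x y z : ℝ} (h : x + y + z = 0) :
    -(3 / 2) ≤ cos x + cos y + cos z := by
  rw [show z = -(x + y) by linarith, cos_neg, cos_add]
  nlinarith [sq_nonneg (1 + cos x + cos y), sq_nonneg (sin x - sin y),
    sin_sq_add_cos_sq x, sin_sq_add_cos_sq y]

lemma cos_two_pi_div_three : cos (2 * π / 3) = -(1 / 2) := by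
  rw [show 2 * π / 3 = π - π / 3 by ring, cos_pi_sub, cos_pi_div_three]

lemma norm_cliffordMap_sub_sq (p q : EuclideanSpace ℝ (Fin 3)) :
    ‖cliffordMap p - cliffordMap q‖ ^ 2 =
      2 - 2 / 3 * (cos (√3 * (p 0 - q 0)) + cos (√3 * (p 1 - q 1)) + cos (√3 * (p 2 - q 2))) := by
  have circle (a b : ℝ) :
      ((1 / √3) * cos a - (1 / √3) * cos b) ^ 2 + ((1 / √3) * sin a - (1 / √3) * sin b) ^ 2
        = (2 - 2 * cos (a - b)) / 3 := by
    rw [← mul_sub, ← mul_sub, mul_pow, mul_pow, ← mul_add, sq_cos_sub_cos_add_sq_sin_sub_sin,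
      div_pow, sq_sqrt (by norm_num : (0 : ℝ) ≤ 3)]
    ring
  rw [EuclideanSpace.norm_eq, sq_sqrt (by positivity)]
  simp only [cliffordMap, Fin.sum_univ_succ, Fin.sum_univ_zero, WithLp.equiv_symm_apply,
    PiLp.sub_apply, norm_eq_abs, sq_abs, Matrix.cons_val_zero, Matrix.cons_val_succ, mul_sub]
  linear_combination circle (√3 * p 0) (√3 * q 0) + circle (√3 * p 1) (√3 * q 1)
    + circle (√3 * p 2) (√3 * q 2)

/-- On the plane `X = {(x,y,z) : x + y + z = 0}`, the extrinsic diameter of the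
immersed flat 2-torus `φ(X) ⊂ ℝ⁶` equals `√3`: `‖φ p - φ q‖ ≤ √3` for all
`p, q ∈ X`, and the value `√3` is attained. -/
theorem cliffordTorus_extrinsic_diameter :
    (∀ p q : EuclideanSpace ℝ (Fin 3),
      p 0 + p 1 + p 2 = 0 → q 0 + q 1 + q 2 = 0 →
      ‖cliffordMap p - cliffordMap q‖ ≤ Real.sqrt 3) ∧
    (∃ p q : EuclideanSpace ℝ (Fin 3),
      p 0 + p 1 + p 2 = 0 ∧ q 0 + q 1 + q 2 = 0 ∧
      ‖cliffordMap p - cliffordMap q‖ = Real.sqrt 3) := by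
  constructor
  · intro p q hp hq
    apply le_sqrt_of_sq_le
    have := neg_three_halves_le_cos_add_cos_add_cos
      (x := √3 * (p 0 - q 0)) (y := √3 * (p 1 - q 1)) (z := √3 * (p 2 - q 2))
      (by linear_combination √3 * (hp - hq))
    rw [norm_cliffordMap_sub_sq]
    linarith
  · obtain ⟨t, ht⟩ : ∃ t, √3 * t = 2 * π / 3 := ⟨2 * π / (3 * √3), by field_simp⟩
    have h2t : cos (√3 * (2 * t)) = -(1 / 2) := by
      rw [mul_left_comm, cos_two_mul, ht, cos_two_pi_div_three]
      norm_num
    refine ⟨!₂[t, t, -(2 * t)], 0, by simp [two_mul], by simp, ?_⟩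
    rw [← sqrt_sq (norm_nonneg _), norm_cliffordMap_sub_sq]
    simp only [Fin.isValue, Matrix.cons_val_zero, Matrix.cons_val_one, Matrix.cons_val,
      PiLp.zero_apply, sub_zero, mul_neg, cos_neg, ht, h2t, cos_two_pi_div_three]
    norm_num
end

section
/- Let r > 0 and let γ : ℝ → ℝⁿ be a C² unit-speed curve (‖γ'(t)‖ = 1 for all t) with ‖γ''(t)‖ ≤ 1/r for all t ∈ ℝ. Then the extrinsic diameter of the image of γ is at least 2r: there exist s, t ∈ ℝ with ‖γ(s) − γ(t)‖ ≥ 2r; indeed ‖γ(πr) − γ(0)‖ ≥ 2r. -/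
open Real Set Filter Topology MeasureTheory RealInnerProductSpace

/-!
The unit tangent `T = γ'` is a curve on the unit sphere of speed at most `1/r`, so
`ψ = ⟪T s, T ·⟫` satisfies `ψ' ≥ -(1/r) √(1 - ψ²)` with `ψ s = 1`; comparing with the solution
`cos ((t - s) / r)` of the extremal equation gives `⟪T s, T t⟫ ≥ cos ((t - s) / r)` for
`|t - s| < π r`. For `u = T (π r / 2)` this reads `⟪u, γ' x⟫ ≥ sin (x / r)` on `[0, π r]`, and
integrating gives `‖γ (π r) - γ 0‖ ≥ ⟪u, γ (π r) - γ 0⟫ ≥ ∫₀^{πr} sin (x / r) dx = 2 r`.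
-/

section Comparison

variable {ψ ψ' : ℝ → ℝ} {c s t : ℝ}

/-- `ε > 0` and `K > c` make the fence `cos (ε + K (x - s))` strict at every contact point. -/
lemma cos_le_of_neg_deriv_le_mul_sqrt_of_lt {ε K : ℝ} (hc : 0 ≤ c)
    (hψ : ∀ x, HasDerivAt ψ (ψ' x) x) (hψ' : ∀ x, -ψ' x ≤ c * √(1 - ψ x ^ 2))
    (hψs : ψ s = 1) (hε : 0 < ε) (hK : c < K) (hst : s ≤ t) (hθt : ε + K * (t - s) ≤ π) :
    cos (ε + K * (t - s)) ≤ ψ t := by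
  have hθ : ∀ x, HasDerivAt (fun x => ε + K * (x - s)) K x := fun x => by
    simpa using ((hasDerivAt_id x).sub_const s).const_mul K |>.const_add ε
  have hfence := image_le_of_deriv_right_lt_deriv_boundary (a := s) (b := t) (f := fun x => -ψ x)
    (B := fun x => -cos (ε + K * (x - s))) (B' := fun x => sin (ε + K * (x - s)) * K)
    (fun x _ => (hψ x).continuousAt.neg.continuousWithinAt)
    (fun x _ => (hψ x).neg.hasDerivWithinAt)
    (by simpa [hψs] using cos_le_one ε)
    (fun x => by simpa using (hθ x).cos.fun_neg)
  refine neg_le_neg_iff.1 (hfence ?_ ⟨hst, le_rfl⟩)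
  intro x ⟨hsx, hxt⟩ hcontact
  set θ := ε + K * (x - s)
  have hsin : 0 < sin θ := by
    have : K * (x - s) < K * (t - s) := by gcongr; linarith
    exact sin_pos_of_pos_of_lt_pi (by nlinarith) (by linarith)
  have hsqrt : √(1 - ψ x ^ 2) = sin θ := by
    rw [neg_inj.1 hcontact, ← sin_sq, sqrt_sq hsin.le]
  calc -ψ' x ≤ c * sin θ := hsqrt ▸ hψ' x
    _ < sin θ * K := by nlinarith

lemma cos_le_of_neg_deriv_le_mul_sqrt (hc : 0 ≤ c)
    (hψ : ∀ x, HasDerivAt ψ (ψ' x) x) (hψ' : ∀ x, -ψ' x ≤ c * √(1 - ψ x ^ 2))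
    (hψs : ψ s = 1) (hst : s ≤ t) (hπ : c * (t - s) < π) :
    cos (c * (t - s)) ≤ ψ t := by
  have hθ : Continuous fun δ : ℝ => δ + (c + δ) * (t - s) := by fun_prop
  have hlim : Tendsto (fun δ => cos (δ + (c + δ) * (t - s))) (𝓝[>] 0)
      (𝓝 (cos (c * (t - s)))) := by
    simpa [Function.comp_def] using
      ((continuous_cos.comp hθ).tendsto 0).mono_left nhdsWithin_le_nhds
  have hsmall : ∀ᶠ δ in 𝓝 (0 : ℝ), δ + (c + δ) * (t - s) < π :=
    hθ.continuousAt.eventually_lt continuousAt_const (by simpa using hπ)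
  refine le_of_tendsto hlim ?_
  filter_upwards [self_mem_nhdsWithin, nhdsWithin_le_nhds hsmall] with δ hδ hδπ
  exact cos_le_of_neg_deriv_le_mul_sqrt_of_lt hc hψ hψ' hψs hδ
    (lt_add_of_pos_right c hδ) hst hδπ.le

end Comparison

section UnitSphere

variable {E : Type*} [NormedAddCommGroup E] [InnerProductSpace ℝ E]

lemma inner_deriv_eq_zero_of_norm_eq_one {v : ℝ → E} {x : ℝ} (hv : DifferentiableAt ℝ v x)
    (hnorm : ∀ t, ‖v t‖ = 1) : ⟪v x, deriv v x⟫ = 0 := by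
  have h := hv.hasDerivAt.norm_sq
  simp only [hnorm, one_pow] at h
  linarith [h.unique (hasDerivAt_const x 1)]

lemma abs_inner_le_norm_mul_sqrt_one_sub_inner_sq_s16 {u v a : E} (hu : ‖u‖ = 1) (hv : ‖v‖ = 1)
    (hva : ⟪v, a⟫ = 0) : |⟪u, a⟫| ≤ ‖a‖ * √(1 - ⟪u, v⟫ ^ 2) := by
  set w := u - ⟪u, v⟫ • v
  have hw : ‖w‖ ^ 2 = 1 - ⟪u, v⟫ ^ 2 := by
    rw [norm_sub_sq_real, norm_smul, real_inner_smul_right, hu, hv, norm_eq_abs]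
    nlinarith [sq_abs ⟪u, v⟫]
  have hwa : ⟪u, a⟫ = ⟪w, a⟫ := by
    simp [w, inner_sub_left, real_inner_smul_left, hva]
  calc |⟪u, a⟫| = |⟪w, a⟫| := by rw [hwa]
    _ ≤ ‖w‖ * ‖a‖ := abs_real_inner_le_norm w a
    _ = ‖a‖ * √(1 - ⟪u, v⟫ ^ 2) := by rw [← hw, sqrt_sq (norm_nonneg w), mul_comm]

lemma cos_le_inner_of_norm_deriv_le_s16 {v : ℝ → E} {c : ℝ} (hc : 0 ≤ c) (hv : Differentiable ℝ v)
    (hnorm : ∀ t, ‖v t‖ = 1) (hspeed : ∀ t, ‖deriv v t‖ ≤ c) {s t : ℝ} (hst : c * |t - s| < π) :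
    cos (c * (t - s)) ≤ ⟪v s, v t⟫ := by
  wlog hle : s ≤ t generalizing s t
  · have := this (by rwa [abs_sub_comm]) (le_of_not_ge hle)
    rwa [real_inner_comm, ← cos_neg, ← mul_neg, neg_sub]
  refine cos_le_of_neg_deriv_le_mul_sqrt (ψ' := fun x => ⟪v s, deriv v x⟫) hc
    (fun x => by simpa using (hasDerivAt_const x (v s)).inner ℝ (hv x).hasDerivAt)
    (fun x => ?_) (by simp [hnorm]) hle
    (by rwa [abs_of_nonneg (sub_nonneg.2 hle)] at hst)
  calc -⟪v s, deriv v x⟫ ≤ |⟪v s, deriv v x⟫| := neg_le_abs _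
    _ ≤ ‖deriv v x‖ * √(1 - ⟪v s, v x⟫ ^ 2) := abs_inner_le_norm_mul_sqrt_one_sub_inner_sq_s16
        (hnorm s) (hnorm x) (inner_deriv_eq_zero_of_norm_eq_one (hv x) hnorm)
    _ ≤ c * √(1 - ⟪v s, v x⟫ ^ 2) := by gcongr; exact hspeed x

lemma integral_le_norm_sub_of_le_inner_deriv {γ : ℝ → E} {φ : ℝ → ℝ} {u : E} {a b : ℝ}
    (hab : a ≤ b) (hγ : Differentiable ℝ γ) (hu : ‖u‖ = 1) (hφ : IntegrableOn φ (Icc a b))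
    (hφγ : ∀ x ∈ Ioo a b, φ x ≤ ⟪u, deriv γ x⟫) :
    ∫ x in a..b, φ x ≤ ‖γ b - γ a‖ :=
  calc ∫ x in a..b, φ x ≤ ⟪u, γ b⟫ - ⟪u, γ a⟫ :=
        intervalIntegral.integral_le_sub_of_hasDeriv_right_of_le hab
          (continuous_const.inner hγ.continuous).continuousOn
          (fun x _ => ((hasDerivAt_const x u).inner ℝ (hγ x).hasDerivAt).hasDerivWithinAt
            |>.congr_deriv (by simp)) hφ hφγ
    _ = ⟪u, γ b - γ a⟫ := (inner_sub_right u _ _).symm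
    _ ≤ ‖γ b - γ a‖ := by simpa [hu] using real_inner_le_norm u (γ b - γ a)

end UnitSphere

/-- A complete C² unit-speed curve `γ : ℝ → ℝⁿ` with curvature at most `1/r` has
extrinsic diameter at least `2r`: there are parameters `s, t` with
`‖γ s - γ t‖ ≥ 2r`; indeed `‖γ (πr) - γ 0‖ ≥ 2r`. -/
theorem curve_with_small_curvature_has_large_diameter {n : ℕ} (r : ℝ) (hr : 0 < r)
    (γ : ℝ → EuclideanSpace ℝ (Fin n))
    (hγ : ContDiff ℝ 2 γ)
    (hspeed : ∀ t : ℝ, ‖deriv γ t‖ = 1)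
    (hcurv : ∀ t : ℝ, ‖deriv (deriv γ) t‖ ≤ 1 / r) :
    (∃ s t : ℝ, 2 * r ≤ ‖γ s - γ t‖) ∧ 2 * r ≤ ‖γ (π * r) - γ 0‖ := by
  have hsin_le : ∀ x ∈ Ioo 0 (π * r), sin (x / r) ≤ ⟪deriv γ (π * r / 2), deriv γ x⟫ := by
    intro x ⟨hx0, hxπ⟩
    have hclose : 1 / r * |x - π * r / 2| < π := by
      rw [div_mul_eq_mul_div, one_mul, div_lt_iff₀ hr, abs_lt]
      constructor <;> nlinarith [pi_pos]
    convert cos_le_inner_of_norm_deriv_le_s16 (by positivity) hγ.differentiable_deriv_two hspeed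
      hcurv hclose using 1
    rw [← cos_sub_pi_div_two]
    field_simp
  have hintegral : ∫ x in (0 : ℝ)..π * r, sin (x / r) = 2 * r := by
    rw [intervalIntegral.integral_comp_div _ hr.ne', integral_sin, mul_div_cancel_right₀ _ hr.ne']
    simp only [zero_div, cos_zero, cos_pi, sub_neg_eq_add, smul_eq_mul]
    ring
  have hchord : 2 * r ≤ ‖γ (π * r) - γ 0‖ := hintegral ▸
    integral_le_norm_sub_of_le_inner_deriv (by positivity) (hγ.differentiable two_ne_zero)
      (hspeed _) ((continuous_sin.comp (continuous_id.div_const r)).integrableOn_Icc (μ := volume))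
      hsin_le
  exact ⟨⟨π * r, 0, hchord⟩, hchord⟩
end
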